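/- arXiv:2207.00625 — 5 statements merged into one kernel-verified Lean document; each statement's English description precedes it below -/
import Mathlib

section
/- An L family of distributions is projective if and only if the marginal probability of every quantifier-free query depends only on the equality-type of the constants occurring in it. Precisely: a family (P_D) of probability distributions over L-structures on finite sets D is projective (i.e., for every injection ι : D' ↪ D and L-structure X on D', P_{D'}(X) equals the P_D-probability of extensions of ι(X)) if and only if for every quantifier-free L-formula φ(x_1,...,x_m) and any two finite sets D, D' with tuples (a_1,...,a_m) from D and (b_1,...,b_m) from D' such that a_i = a_j iff b_i = b_j for all i,j, the P_D-probability that φ(a_1,...,a_m) holds equals the P_{D'}-probability that φ(b_1,...,b_m) holds. -/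
open MeasureTheory

/-- An `L`-structure on domain `D`: an interpretation of each relation symbol `R`
(of arity `ar R`) as a set of `ar R`-tuples from `D`. -/
def Struc (L : Type) (ar : L → ℕ) (D : Type) : Type :=
  ∀ R : L, (Fin (ar R) → D) → Prop

/-- `ω` (a structure on `D`) extends the image of `X` (a structure on `D'`) along the
injection `ι`; equivalently, `ι` is an embedding of structures from `X` to `ω`. -/
def ExtendsAlong {L : Type} {ar : L → ℕ} {D' D : Type} (ι : D' ↪ D)
    (X : Struc L ar D') (ω : Struc L ar D) : Prop :=
  ∀ (R : L) (s : Fin (ar R) → D'), ω R (fun i => ι (s i)) ↔ X R s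

/-- Transport of a structure along a bijection. -/
def Struc.map {L : Type} {ar : L → ℕ} {D D' : Type} (e : D ≃ D')
    (X : Struc L ar D) : Struc L ar D' :=
  fun R t => X R (fun i => e.symm (t i))

/-- The reduct of a structure to a subvocabulary `E`. -/
def reduct {L : Type} {ar : L → ℕ} (E : Set L) {D : Type} (X : Struc L ar D) :
    Struc ↥E (fun R => ar ↑R) D :=
  fun R t => X ↑R t

/-- A family of distributions indexed by all finite sets is projective if marginals
are invariant under injections. -/
def Projective {L : Type} {ar : L → ℕ}
    (P : ∀ (D : Type) [Fintype D], PMF (Struc L ar D)) : Prop :=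
  ∀ (D' D : Type) [Fintype D'] [Fintype D] (ι : D' ↪ D) (X : Struc L ar D'),
    P D' X = (P D).toOuterMeasure {ω | ExtendsAlong ι X ω}

/-- A structured (`S`-input, `T`-output) family of distributions is projective if
marginals are invariant under embeddings of input structures. -/
def ProjFam {S T : Type} {arS : S → ℕ} {arT : T → ℕ}
    (P : ∀ (D : Type) [Fintype D], Struc S arS D → PMF (Struc T arT D)) : Prop :=
  ∀ (D' D : Type) [Fintype D'] [Fintype D] (ι : D' ↪ D)
    (A' : Struc S arS D') (A : Struc S arS D), ExtendsAlong ι A' A →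
    ∀ X : Struc T arT D',
      P D' A' X = (P D A).toOuterMeasure {ω | ExtendsAlong ι X ω}
/-- Quantifier-free formulas over vocabulary `L` with variables `x_1, ..., x_m`. -/
inductive QF (L : Type) (ar : L → ℕ) (m : ℕ) : Type
  | atom (R : L) (t : Fin (ar R) → Fin m)
  | eq (i j : Fin m)
  | not (φ : QF L ar m)
  | and (φ ψ : QF L ar m)
  | or (φ ψ : QF L ar m)

/-- Satisfaction of a quantifier-free formula in a structure `ω`, with parameters `a`. -/
def QF.Sat {L : Type} {ar : L → ℕ} {m : ℕ} {D : Type}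
    (ω : Struc L ar D) (a : Fin m → D) : QF L ar m → Prop
  | .atom R t => ω R (fun i => a (t i))
  | .eq i j => a i = a j
  | .not φ => ¬ QF.Sat ω a φ
  | .and φ ψ => QF.Sat ω a φ ∧ QF.Sat ω a ψ
  | .or φ ψ => QF.Sat ω a φ ∨ QF.Sat ω a ψ

/-- All relational atoms in the formula have arity at most `k`. -/
def QF.ArityLE {L : Type} {ar : L → ℕ} {m : ℕ} (k : ℕ) : QF L ar m → Prop
  | .atom R _ => ar R ≤ k
  | .eq _ _ => True
  | .not φ => QF.ArityLE k φ
  | .and φ ψ => QF.ArityLE k φ ∧ QF.ArityLE k ψ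
  | .or φ ψ => QF.ArityLE k φ ∧ QF.ArityLE k ψ

/-!
Projectivity says exactly that `P D'` is the pushforward of `P D` under restriction along `ι`.
For the forward direction, a quantifier-free event at a tuple `a` is the restriction of the same
event at the canonical tuple of the quotient of `Fin m` by the kernel of `a`, along the injective
kernel lift; so its probability depends only on that kernel, i.e. on the equality type of `a`.
Conversely, enumerating `D'` as `e : Fin m ≃ D'`, the event that `ω` extends `X` along `ι` is
defined by the atomic diagram of `X` at the tuple `ι ∘ e`, and the tuples `e` and `ι ∘ e` have the
same (trivial) equality type.
-/

namespace Struc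

variable {L : Type} {ar : L → ℕ}

def comap {D' D : Type} (f : D' → D) (ω : Struc L ar D) : Struc L ar D' :=
  fun R s => ω R (f ∘ s)

theorem extendsAlong_iff_comap_eq {D' D : Type} (ι : D' ↪ D) (X : Struc L ar D')
    (ω : Struc L ar D) : ExtendsAlong ι X ω ↔ ω.comap ι = X := by
  refine ⟨fun h => funext fun R => funext fun s => propext (h R s), ?_⟩
  rintro rfl R s
  exact Iff.rfl

theorem extendsAlong_refl_iff {D : Type} (X ω : Struc L ar D) :
    ExtendsAlong (Function.Embedding.refl D) X ω ↔ ω = X :=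
  extendsAlong_iff_comap_eq _ X ω

end Struc

namespace QF

variable {L : Type} {ar : L → ℕ} {m : ℕ}

theorem sat_comp_iff_sat_comap {D' D : Type} {f : D' → D} (hf : Function.Injective f)
    (ω : Struc L ar D) (c : Fin m → D') (φ : QF L ar m) :
    Sat ω (f ∘ c) φ ↔ Sat (ω.comap f) c φ := by
  induction φ with
  | atom R t => exact Iff.rfl
  | eq i j => exact hf.eq_iff
  | not φ ih => exact not_congr ih
  | and φ ψ ih₁ ih₂ => exact and_congr ih₁ ih₂
  | or φ ψ ih₁ ih₂ => exact or_congr ih₁ ih₂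

theorem sat_foldr_and {D : Type} (ω : Struc L ar D) (c : Fin m → D) (φ : QF L ar m)
    (l : List (QF L ar m)) :
    Sat ω c (l.foldr QF.and φ) ↔ (∀ ψ ∈ l, Sat ω c ψ) ∧ Sat ω c φ := by
  induction l with
  | nil => simp
  | cons ψ l ih => simp only [List.foldr_cons, Sat, ih, List.forall_mem_cons, and_assoc]

abbrev Atom (L : Type) (ar : L → ℕ) (m : ℕ) : Type := Σ R : L, Fin (ar R) → Fin m

open Classical in
noncomputable def literal {D : Type} (X : Struc L ar D) (a : Fin m → D) (p : Atom L ar m) :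
    QF L ar m :=
  if X p.1 (a ∘ p.2) then atom p.1 p.2 else not (atom p.1 p.2)

theorem sat_literal {D E : Type} (X : Struc L ar D) (a : Fin m → D) (p : Atom L ar m)
    (ω : Struc L ar E) (c : Fin m → E) :
    Sat ω c (literal X a p) ↔ (ω p.1 (c ∘ p.2) ↔ X p.1 (a ∘ p.2)) := by
  unfold literal
  split_ifs with hX <;> simp only [Sat, hX, iff_true, iff_false] <;> exact Iff.rfl

/-- The literal of `p₀` seeds the conjunction: without a variable or an atom there is no
formula at all, not even a true one. -/
noncomputable def diagram [Fintype L] {D : Type} (X : Struc L ar D) (a : Fin m → D)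
    (p₀ : Atom L ar m) : QF L ar m :=
  ((Finset.univ : Finset (Atom L ar m)).toList.map (literal X a)).foldr QF.and (literal X a p₀)

theorem sat_diagram_iff [Fintype L] {D E : Type} (X : Struc L ar D) (a : Fin m → D)
    (p₀ : Atom L ar m) (ω : Struc L ar E) (c : Fin m → E) :
    Sat ω c (diagram X a p₀) ↔ ∀ p : Atom L ar m, ω p.1 (c ∘ p.2) ↔ X p.1 (a ∘ p.2) := by
  simp only [diagram, sat_foldr_and, List.forall_mem_map, Finset.mem_toList,
    Finset.mem_univ, forall_const, sat_literal]
  exact ⟨And.left, fun h => ⟨h, h p₀⟩⟩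

theorem sat_diagram_iff_extendsAlong [Fintype L] {D' D : Type} (e : Fin m ≃ D')
    (X : Struc L ar D') (p₀ : Atom L ar m) (ι : D' ↪ D) (ω : Struc L ar D) :
    Sat ω (ι ∘ e) (diagram X e p₀) ↔ ExtendsAlong ι X ω := by
  rw [sat_diagram_iff]
  refine ⟨fun h R s => ?_, fun h p => h p.1 (e ∘ p.2)⟩
  simpa only [Function.comp_def, Equiv.apply_symm_apply] using h ⟨R, e.symm ∘ s⟩

end QF

namespace Projective

variable {L : Type} {ar : L → ℕ} {P : ∀ (D : Type) [Fintype D], PMF (Struc L ar D)}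

theorem map_comap (hP : Projective P) {D' D : Type} [Fintype D'] [Fintype D] (ι : D' ↪ D) :
    (P D).map (Struc.comap ι) = P D' := by
  ext X
  rw [hP D' D ι X, ← PMF.toOuterMeasure_apply_singleton, PMF.toOuterMeasure_map_apply]
  congr 1
  ext ω
  exact (Struc.extendsAlong_iff_comap_eq ι X ω).symm

theorem toOuterMeasure_sat_comp (hP : Projective P) {m : ℕ} {E D : Type} [Fintype E]
    [Fintype D] {f : E → D} (hf : Function.Injective f) (c : Fin m → E) (φ : QF L ar m) :
    (P D).toOuterMeasure {ω | QF.Sat ω (f ∘ c) φ} = (P E).toOuterMeasure {ω | QF.Sat ω c φ} := by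
  rw [← hP.map_comap ⟨f, hf⟩, PMF.toOuterMeasure_map_apply]
  congr 1
  ext ω
  exact QF.sat_comp_iff_sat_comap hf ω c φ

theorem toOuterMeasure_sat_eq (hP : Projective P) {m : ℕ} (φ : QF L ar m) {D D' : Type}
    [Fintype D] [Fintype D'] {a : Fin m → D} {b : Fin m → D'}
    (hab : ∀ i j : Fin m, a i = a j ↔ b i = b j) :
    (P D).toOuterMeasure {ω | QF.Sat ω a φ} = (P D').toOuterMeasure {ω | QF.Sat ω b φ} := by
  let E := Quotient (Setoid.ker a)
  have : Fintype E := Fintype.ofFinite E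
  let c : Fin m → E := Quotient.mk _
  let g : E → D' := Quotient.lift b fun i j h => (hab i j).1 h
  have hg : Function.Injective g :=
    Quotient.ind₂ fun i j h => Quotient.sound ((hab i j).2 h)
  calc (P D).toOuterMeasure {ω | QF.Sat ω (Setoid.kerLift a ∘ c) φ}
      = (P E).toOuterMeasure {ω | QF.Sat ω c φ} :=
        hP.toOuterMeasure_sat_comp (Setoid.kerLift_injective a) c φ
    _ = (P D').toOuterMeasure {ω | QF.Sat ω (g ∘ c) φ} :=
        (hP.toOuterMeasure_sat_comp hg c φ).symm

theorem of_toOuterMeasure_sat_eq [Fintype L]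
    (h : ∀ (m : ℕ) (φ : QF L ar m) (D D' : Type) [Fintype D] [Fintype D']
      (a : Fin m → D) (b : Fin m → D'), (∀ i j : Fin m, a i = a j ↔ b i = b j) →
      (P D).toOuterMeasure {ω | QF.Sat ω a φ} = (P D').toOuterMeasure {ω | QF.Sat ω b φ}) :
    Projective P := by
  intro D' D _ _ ι X
  let e : Fin (Fintype.card D') ≃ D' := (Fintype.equivFin D').symm
  have hX :
      P D' X = (P D').toOuterMeasure {ω | ExtendsAlong (Function.Embedding.refl D') X ω} := by
    simp only [Struc.extendsAlong_refl_iff, Set.ofPred_eq_eq_singleton,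
      PMF.toOuterMeasure_apply_singleton]
  rw [hX]
  rcases isEmpty_or_nonempty (QF.Atom L ar (Fintype.card D')) with hno | ⟨⟨p₀⟩⟩
  · have hall : ∀ {E : Type} (κ : D' ↪ E), {ω : Struc L ar E | ExtendsAlong κ X ω} = Set.univ :=
      fun κ => Set.eq_univ_of_forall fun ω R s => (hno.false ⟨R, e.symm ∘ s⟩).elim
    simp only [hall, (PMF.toOuterMeasure_apply_eq_one_iff _ _).2 (Set.subset_univ _)]
  · simp only [← QF.sat_diagram_iff_extendsAlong e X p₀]
    exact h _ _ _ _ _ _ fun i j => (ι.injective.eq_iff).symm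

end Projective

/-- a family of distributions is projective iff the marginal probability of
every quantifier-free query depends only on the equality-type of its parameters. -/
theorem stmt1 {L : Type} [Fintype L] (ar : L → ℕ)
    (P : ∀ (D : Type) [Fintype D], PMF (Struc L ar D)) :
    Projective P ↔
      ∀ (m : ℕ) (φ : QF L ar m) (D D' : Type) [Fintype D] [Fintype D']
        (a : Fin m → D) (b : Fin m → D'),
        (∀ i j : Fin m, a i = a j ↔ b i = b j) →
        (P D).toOuterMeasure {ω | QF.Sat ω a φ} =
          (P D').toOuterMeasure {ω | QF.Sat ω b φ} :=
  ⟨fun hP _ φ _ _ _ _ _ _ hab => hP.toOuterMeasure_sat_eq φ hab,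
    Projective.of_toOuterMeasure_sat_eq⟩
end

section
/- Composition of projective families is projective. Let L_Ext ⊆ L ⊆ L_Int be relational vocabularies. Let (P) be a projective L_Ext-L family of distributions and (Q) a projective L-L_Int family of distributions. Define, for each finite L_Ext-structure D and each L_Int-structure X expanding D, (Q∘P)_D(X) := P_D(X_L) · Q_{X_L}(X), where X_L denotes the reduct of X to L. Then (Q∘P) is a projective L_Ext-L_Int family of distributions. -/
open MeasureTheory

/-- The reduct of an `Mv`-structure to a smaller subvocabulary `E ⊆ Mv`. -/
def reduct2 {L : Type} {ar : L → ℕ} {E Mv : Set L} (h : E ⊆ Mv) {D : Type}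
    (X : Struc ↥Mv (fun R => ar ↑R) D) : Struc ↥E (fun R => ar ↑R) D :=
  fun R t => X ⟨↑R, h R.2⟩ t

/-- Restriction of a structure along an injection. -/
def restr {L : Type} {ar : L → ℕ} {D' D : Type} (ι : D' ↪ D)
    (Y : Struc L ar D) : Struc L ar D' :=
  fun R s => Y R (fun i => ι (s i))

lemma extendsAlong_iff {L : Type} {ar : L → ℕ} {D' D : Type} (ι : D' ↪ D)
    (X : Struc L ar D') (ω : Struc L ar D) :
    ExtendsAlong ι X ω ↔ restr ι ω = X := by
  constructor
  · intro h; funext R s; exact propext (h R s)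
  · intro h R s
    have : restr ι ω R s = X R s := by rw [h]
    exact this ▸ Iff.rfl

/-- the composition of a projective `L_Ext`-`L` family `P` with a projective
`L`-`L_Int` family `Q` (given by `(Q∘P)_D(X) = P_D(X_L) * Q_{X_L}(X)`, realized as `bind`)
is again projective. -/
theorem stmt2 {L : Type} [Fintype L] (ar : L → ℕ) (E Mv : Set L) (hEM : E ⊆ Mv)
    (P : ∀ (D : Type) [Fintype D],
      Struc ↥E (fun R => ar ↑R) D → PMF (Struc ↥Mv (fun R => ar ↑R) D))
    (Q : ∀ (D : Type) [Fintype D],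
      Struc ↥Mv (fun R => ar ↑R) D → PMF (Struc L ar D))
    (hPsupp : ∀ (D : Type) [Fintype D] (A : Struc ↥E (fun R => ar ↑R) D) Y,
      P D A Y ≠ 0 → reduct2 hEM Y = A)
    (hQsupp : ∀ (D : Type) [Fintype D] (A : Struc ↥Mv (fun R => ar ↑R) D) X,
      Q D A X ≠ 0 → reduct Mv X = A)
    (hP : ProjFam P) (hQ : ProjFam Q) :
    (∀ (D : Type) [Fintype D] (A : Struc ↥E (fun R => ar ↑R) D) (X : Struc L ar D),
      ((P D A).bind (fun Y => Q D Y)) X =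
        P D A (reduct Mv X) * Q D (reduct Mv X) X) ∧
    ProjFam (fun D _ A => (P D A).bind (fun Y => Q D Y)) := by
  classical
  constructor
  · intro D _ A X
    rw [PMF.bind_apply]
    refine tsum_eq_single (reduct Mv X) fun Y hY => ?_
    by_cases h : Q D Y X = 0
    · simp [h]
    · exact absurd (hQsupp D Y X h).symm hY
  · intro D' D _ _ ι A' A hA X
    -- both sides equal `∑' Y, P D A Y * Q D' (restr ι Y) X`
    have hmap : ∀ Y', P D' A' Y' = ((P D A).map (restr ι)) Y' := by
      intro Y'
      rw [hP D' D ι A' A hA Y', PMF.toOuterMeasure_apply, PMF.map_apply]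
      refine tsum_congr fun Y => ?_
      simp only [Set.indicator_apply, Set.mem_setOf_eq, extendsAlong_iff]
      by_cases h : restr ι Y = Y'
      · simp [h]
      · simp [h, Ne.symm h]
    have hLHS : ((P D' A').bind fun Y => Q D' Y) X
        = ∑' Y, P D A Y * Q D' (restr ι Y) X := by
      rw [PMF.bind_apply]
      calc ∑' Y', P D' A' Y' * Q D' Y' X
          = ∑' Y', ((P D A).map (restr ι)) Y' * Q D' Y' X := by
            exact tsum_congr fun Y' => by rw [hmap Y']
        _ = ((P D A).map (restr ι)).bind (fun Y' => Q D' Y') X := by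
            rw [PMF.bind_apply]
        _ = (P D A).bind (fun Y => Q D' (restr ι Y)) X := by
            rw [PMF.bind_map]; rfl
        _ = ∑' Y, P D A Y * Q D' (restr ι Y) X := by rw [PMF.bind_apply]
    have hRHS : ((P D A).bind fun Y => Q D Y).toOuterMeasure {ω | ExtendsAlong ι X ω}
        = ∑' Y, P D A Y * Q D' (restr ι Y) X := by
      rw [PMF.toOuterMeasure_apply]
      have h1 : ∀ ω, Set.indicator {ω | ExtendsAlong ι X ω} ((P D A).bind (Q D)) ω
          = ∑' Y, P D A Y * Set.indicator {ω | ExtendsAlong ι X ω} (Q D Y) ω := by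
        intro ω
        by_cases hω : ω ∈ {ω | ExtendsAlong ι X ω}
        · simp [Set.indicator_of_mem hω, PMF.bind_apply]
        · simp [Set.indicator_of_notMem hω]
      rw [tsum_congr h1, ENNReal.tsum_comm]
      refine tsum_congr fun Y => ?_
      rw [ENNReal.tsum_mul_left, ← PMF.toOuterMeasure_apply]
      have hext : ExtendsAlong ι (restr ι Y) Y := fun R s => Iff.rfl
      rw [← hQ D' D ι (restr ι Y) Y hext X]
    show ((P D' A').bind fun Y => Q D' Y) X
      = ((P D A).bind fun Y => Q D Y).toOuterMeasure {ω | ExtendsAlong ι X ω}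
    rw [hLHS, hRHS]
end

section
/- An L_Ext-L_Int family of distributions is projective if and only if for every quantifier-free L_Int-query the marginal probability depends only on the L_Ext-type of the parameters. Precisely: (P_D) is projective iff for every quantifier-free L_Int-formula φ(x_1,...,x_m), for any two finite L_Ext-structures D, D' and tuples (a_1,...,a_m) from D, (b_1,...,b_m) from D' that satisfy the same quantifier-free L_Ext-formulas (including equalities), the P_D-probability of φ(a_1,...,a_m) equals the P_{D'}-probability of φ(b_1,...,b_m). -/
open MeasureTheory

/-!
If `a` and `b` have the same `L_Ext`-type, the substructures they generate are isomorphic, to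
`D₀` say; by projectivity the probability of `φ(a)` in `D` and of `φ(b)` in `D'` are both the
`P_{D₀}`-probability of `φ` at the common preimage of the two tuples. Conversely, for an
embedding `ι : D' ↪ D` and an `L_Int`-structure `X` on `D'`, the event that `ω` extends `X`
along `ι` is defined by the atomic diagram of `X` evaluated at an enumeration of `ι(D')`, and
the event `{X}` by the same formula at the enumeration of `D'`; the two tuples have the same
`L_Ext`-type, so the events have the same probability.
-/

section

variable {L : Type} {ar : L → ℕ}

def Struc.comap_s4 {D₀ D : Type} (f : D₀ → D) (ω : Struc L ar D) : Struc L ar D₀ :=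
  fun R s => ω R (fun i => f (s i))

theorem Struc.comap_injective {D₀ D : Type} {f : D₀ → D} (hf : Function.Surjective f) :
    Function.Injective (Struc.comap_s4 (L := L) (ar := ar) f) := by
  intro X Y hXY
  funext R s
  obtain ⟨t, rfl⟩ := hf.comp_left s
  exact congrFun (congrFun hXY R) t

theorem extendsAlong_iff_comap_eq {D₀ D : Type} (ι : D₀ ↪ D) (X : Struc L ar D₀)
    (ω : Struc L ar D) : ExtendsAlong ι X ω ↔ ω.comap_s4 ι = X :=
  ⟨fun h => funext fun R => funext fun s => propext (h R s), fun h => h ▸ fun _ _ => Iff.rfl⟩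

theorem extendsAlong_comap {D₀ D : Type} (ι : D₀ ↪ D) (ω : Struc L ar D) :
    ExtendsAlong ι (ω.comap_s4 ι) ω :=
  (extendsAlong_iff_comap_eq ι _ ω).2 rfl

theorem QF.sat_comap {D₀ D : Type} {m : ℕ} {f : D₀ → D} (hf : Function.Injective f)
    (ω : Struc L ar D) (a : Fin m → D₀) (φ : QF L ar m) :
    QF.Sat (ω.comap_s4 f) a φ ↔ QF.Sat ω (f ∘ a) φ := by
  induction φ with
  | atom R t => exact Iff.rfl
  | eq i j => exact hf.eq_iff.symm
  | not φ ih => exact not_congr ih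
  | and φ ψ ih₁ ih₂ => exact and_congr ih₁ ih₂
  | or φ ψ ih₁ ih₂ => exact or_congr ih₁ ih₂

theorem QF.sat_foldr_and_s4 {D : Type} {m : ℕ} (ω : Struc L ar D) (a : Fin m → D)
    (l : List (QF L ar m)) (φ : QF L ar m) :
    QF.Sat ω a (l.foldr .and φ) ↔ (∀ ψ ∈ l, QF.Sat ω a ψ) ∧ QF.Sat ω a φ := by
  induction l with
  | nil => simp
  | cons ψ l ih => simp only [List.foldr_cons, QF.Sat, ih, List.forall_mem_cons, and_assoc]

theorem exists_embedding_range_of_sat_iff {S : Type} {arS : S → ℕ} {m : ℕ} {D D' : Type}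
    {A : Struc S arS D} {A' : Struc S arS D'} {a : Fin m → D} {b : Fin m → D'}
    (h : ∀ ψ : QF S arS m, QF.Sat A a ψ ↔ QF.Sat A' b ψ) :
    ∃ ι' : Set.range a ↪ D', ι' ∘ Set.rangeFactorization a = b ∧
      ExtendsAlong ι' (A.comap_s4 (Function.Embedding.subtype _)) A' := by
  have hsplit : ∀ i, b (Set.rangeSplitting a (Set.rangeFactorization a i)) = b i := fun i =>
    (h (.eq _ i)).1 (Set.apply_rangeSplitting a _)
  refine ⟨⟨fun d => b (Set.rangeSplitting a d), fun d₁ d₂ hd => ?_⟩, funext hsplit, ?_⟩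
  · have had : a (Set.rangeSplitting a d₁) = a (Set.rangeSplitting a d₂) := (h (.eq _ _)).2 hd
    rw [Set.apply_rangeSplitting a, Set.apply_rangeSplitting a] at had
    exact Subtype.ext had
  · intro R s
    have hatom := h (.atom R fun i => Set.rangeSplitting a (s i))
    simp only [QF.Sat, Set.apply_rangeSplitting] at hatom
    exact hatom.symm

section Diagram

variable {m : ℕ}

open Classical in
noncomputable def QF.literal_s4 (Y : Struc L ar (Fin m)) (p : Σ R : L, Fin (ar R) → Fin m) :
    QF L ar m :=
  if Y p.1 p.2 then .atom p.1 p.2 else .not (.atom p.1 p.2)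

theorem QF.sat_literal_s4 {D : Type} (ω : Struc L ar D) (c : Fin m → D) (Y : Struc L ar (Fin m))
    (p : Σ R : L, Fin (ar R) → Fin m) :
    QF.Sat ω c (QF.literal_s4 Y p) ↔ (ω p.1 (fun i => c (p.2 i)) ↔ Y p.1 p.2) := by
  by_cases hp : Y p.1 p.2 <;> simp [QF.literal_s4, hp, QF.Sat]

variable [Fintype L]

/-- The atomic diagram of `Y`. The literal at `p₀` only serves as the base of the conjunction,
as `QF` has no formula `true`. -/
noncomputable def QF.diagram_s4 (Y : Struc L ar (Fin m)) (p₀ : Σ R : L, Fin (ar R) → Fin m) :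
    QF L ar m :=
  ((Finset.univ.toList).map (QF.literal_s4 Y)).foldr .and (QF.literal_s4 Y p₀)

theorem QF.sat_diagram {D : Type} (ω : Struc L ar D) (c : Fin m → D) (Y : Struc L ar (Fin m))
    (p₀ : Σ R : L, Fin (ar R) → Fin m) :
    QF.Sat ω c (QF.diagram_s4 Y p₀) ↔ ω.comap_s4 c = Y := by
  simp only [QF.diagram_s4, QF.sat_foldr_and_s4, List.forall_mem_map, Finset.mem_toList,
    Finset.mem_univ, forall_const, QF.sat_literal_s4]
  constructor
  · rintro ⟨hall, -⟩
    exact funext fun R => funext fun t => propext (hall ⟨R, t⟩)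
  · rintro rfl
    exact ⟨fun _ => Iff.rfl, Iff.rfl⟩

/-- The first alternative is the case of no atoms in `m` variables, where `QF L ar m` may be
empty. -/
theorem QF.exists_sat_iff_comap_eq (Y : Struc L ar (Fin m)) :
    (∀ {D : Type} (ω : Struc L ar D) (c : Fin m → D), ω.comap_s4 c = Y) ∨
      ∃ φ : QF L ar m, ∀ {D : Type} (ω : Struc L ar D) (c : Fin m → D),
        QF.Sat ω c φ ↔ ω.comap_s4 c = Y := by
  rcases isEmpty_or_nonempty (Σ R : L, Fin (ar R) → Fin m) with hempty | hatom
  · exact Or.inl fun _ _ => funext fun R => funext fun t => (hempty.false ⟨R, t⟩).elim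
  · obtain ⟨p₀⟩ := hatom
    exact Or.inr ⟨QF.diagram_s4 Y p₀, fun ω c => QF.sat_diagram ω c Y p₀⟩

end Diagram

section Projectivity

variable {E : Set L}

def QFMarginalsTypeInvariant
    (P : ∀ (D : Type) [Fintype D], Struc ↥E (fun R => ar ↑R) D → PMF (Struc L ar D)) : Prop :=
  ∀ (m : ℕ) (φ : QF L ar m) (D D' : Type) [Fintype D] [Fintype D']
    (A : Struc ↥E (fun R => ar ↑R) D) (A' : Struc ↥E (fun R => ar ↑R) D')
    (a : Fin m → D) (b : Fin m → D'),
    (∀ ψ : QF ↥E (fun R => ar ↑R) m, QF.Sat A a ψ ↔ QF.Sat A' b ψ) →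
    (P D A).toOuterMeasure {ω | QF.Sat ω a φ} = (P D' A').toOuterMeasure {ω | QF.Sat ω b φ}

variable {P : ∀ (D : Type) [Fintype D], Struc ↥E (fun R => ar ↑R) D → PMF (Struc L ar D)}

theorem ProjFam.map_comap (hP : ProjFam P) {D₀ D : Type} [Fintype D₀] [Fintype D]
    {ι : D₀ ↪ D} {A₀ : Struc ↥E (fun R => ar ↑R) D₀} {A : Struc ↥E (fun R => ar ↑R) D}
    (hExt : ExtendsAlong ι A₀ A) : (P D A).map (Struc.comap_s4 ι) = P D₀ A₀ := by
  ext X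
  rw [← PMF.toOuterMeasure_apply_singleton, PMF.toOuterMeasure_map_apply, hP D₀ D ι A₀ A hExt X]
  congr 1
  ext ω
  exact (extendsAlong_iff_comap_eq ι X ω).symm

theorem ProjFam.prob_sat_comp (hP : ProjFam P) {D₀ D : Type} [Fintype D₀] [Fintype D]
    {ι : D₀ ↪ D} {A₀ : Struc ↥E (fun R => ar ↑R) D₀} {A : Struc ↥E (fun R => ar ↑R) D}
    (hExt : ExtendsAlong ι A₀ A) {m : ℕ} (a₀ : Fin m → D₀) (φ : QF L ar m) :
    (P D A).toOuterMeasure {ω | QF.Sat ω (ι ∘ a₀) φ} =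
      (P D₀ A₀).toOuterMeasure {X | QF.Sat X a₀ φ} := by
  have hset : {ω | QF.Sat ω (ι ∘ a₀) φ} = Struc.comap_s4 ι ⁻¹' {X | QF.Sat X a₀ φ} :=
    Set.ext fun ω => (QF.sat_comap ι.injective ω a₀ φ).symm
  rw [hset, ← PMF.toOuterMeasure_map_apply, hP.map_comap hExt]

theorem ProjFam.qfMarginalsTypeInvariant (hP : ProjFam P) : QFMarginalsTypeInvariant P := by
  classical
  intro m φ D D' _ _ A A' a b htype
  obtain ⟨ι', hb, hExt'⟩ := exists_embedding_range_of_sat_iff htype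
  let ι := Function.Embedding.subtype (· ∈ Set.range a)
  calc (P D A).toOuterMeasure {ω | QF.Sat ω (ι ∘ Set.rangeFactorization a) φ}
      = (P _ (A.comap_s4 ι)).toOuterMeasure {X | QF.Sat X (Set.rangeFactorization a) φ} :=
        hP.prob_sat_comp (extendsAlong_comap ι A) _ φ
    _ = (P D' A').toOuterMeasure {ω | QF.Sat ω b φ} := by
        rw [← hb]
        exact (hP.prob_sat_comp hExt' _ φ).symm

variable [Fintype L]

theorem QFMarginalsTypeInvariant.prob_comap_eq (h : QFMarginalsTypeInvariant P) {m : ℕ}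
    {D D' : Type} [Fintype D] [Fintype D'] {A : Struc ↥E (fun R => ar ↑R) D}
    {A' : Struc ↥E (fun R => ar ↑R) D'} {c : Fin m → D} {c' : Fin m → D'}
    (htype : ∀ ψ : QF ↥E (fun R => ar ↑R) m, QF.Sat A c ψ ↔ QF.Sat A' c' ψ)
    (Y : Struc L ar (Fin m)) :
    (P D A).toOuterMeasure {ω | ω.comap_s4 c = Y} =
      (P D' A').toOuterMeasure {ω | ω.comap_s4 c' = Y} := by
  rcases QF.exists_sat_iff_comap_eq Y with htriv | ⟨φ, hφ⟩
  · simp only [htriv, Set.ofPred_true]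
    rw [(PMF.toOuterMeasure_apply_eq_one_iff _ _).2 (Set.subset_univ _),
      (PMF.toOuterMeasure_apply_eq_one_iff _ _).2 (Set.subset_univ _)]
  · simp only [← hφ]
    exact h m φ D D' A A' c c' htype

theorem QFMarginalsTypeInvariant.projFam (h : QFMarginalsTypeInvariant P) : ProjFam P := by
  intro D' D _ _ ι A' A hExt X
  let e := (Fintype.equivFin D').symm
  have htype : ∀ ψ, QF.Sat A (ι ∘ e) ψ ↔ QF.Sat A' e ψ := fun ψ => by
    rw [← (extendsAlong_iff_comap_eq ι A' A).1 hExt, QF.sat_comap ι.injective]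
  have hD : {ω | ExtendsAlong ι X ω} = {ω : Struc L ar D | ω.comap_s4 (ι ∘ e) = X.comap_s4 e} :=
    Set.ext fun ω => (extendsAlong_iff_comap_eq ι X ω).trans
      (Struc.comap_injective e.surjective).eq_iff.symm
  have hD' : {X} = {ω : Struc L ar D' | ω.comap_s4 e = X.comap_s4 e} :=
    Set.ext fun ω => (Struc.comap_injective e.surjective).eq_iff.symm
  rw [← PMF.toOuterMeasure_apply_singleton, hD, hD']
  exact (h.prob_comap_eq htype _).symm

end Projectivity

end

/-- an `L_Ext`-`L_Int` family of distributions is projective iff the marginal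
probability of every quantifier-free `L_Int`-query depends only on the `L_Ext`-type
(the quantifier-free `L_Ext`-formulas with equality satisfied) of its parameters. -/
theorem stmt4 {L : Type} [Fintype L] (ar : L → ℕ) (E : Set L)
    (P : ∀ (D : Type) [Fintype D],
      Struc ↥E (fun R => ar ↑R) D → PMF (Struc L ar D)) :
    ProjFam P ↔
      ∀ (m : ℕ) (φ : QF L ar m) (D D' : Type) [Fintype D] [Fintype D']
        (A : Struc ↥E (fun R => ar ↑R) D) (A' : Struc ↥E (fun R => ar ↑R) D')
        (a : Fin m → D) (b : Fin m → D'),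
        (∀ ψ : QF ↥E (fun R => ar ↑R) m, QF.Sat A a ψ ↔ QF.Sat A' b ψ) →
        (P D A).toOuterMeasure {ω | QF.Sat ω a φ} =
          (P D' A').toOuterMeasure {ω | QF.Sat ω b φ} :=
  ⟨ProjFam.qfMarginalsTypeInvariant, QFMarginalsTypeInvariant.projFam⟩
end

section
/- Premeasure verification for the induced measure on expansions of a countable structure: let M be a countably infinite L_Ext-structure with fixed enumeration and (P) a projective L_Ext-L_Int family of distributions on finite structures. Define P(D_X) := P_{X|_{L_Ext}}(X) on the semiring 𝒟 of cylinder sets over initial segments (together with P(∅)=0). Then P is σ-additive on 𝒟: whenever D_X is the disjoint union of a family {D_{X_i}}_{i∈I} of members of 𝒟, one has P(D_X) = Σ_{i∈I} P(D_{X_i}). (By the compactness lemma such a cover is necessarily finite, and finite additivity follows from projectivity and additivity of the distribution on a common initial segment.) -/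
open MeasureTheory

/-- Restriction of a structure on `ℕ` to the initial segment `{0, ..., n-1}`. -/
def restrictFin {L : Type} {ar : L → ℕ} (n : ℕ) (ω : Struc L ar ℕ) :
    Struc L ar (Fin n) :=
  fun R t => ω R (fun i => (t i : ℕ))

/-- The cylinder set of all `L_Int`-expansions of `M` extending the expansion `X`
of the initial segment of length `n`. -/
def Cyl {L : Type} (ar : L → ℕ) (E : Set L) (M : Struc ↥E (fun R => ar ↑R) ℕ)
    (n : ℕ) (X : Struc L ar (Fin n)) : Set (Struc L ar ℕ) :=
  {ω | reduct E ω = M ∧ restrictFin n ω = X}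

/-
Giving truth values the discrete topology makes the expansions of `M` a closed subset of a Cantor
space in which every cylinder over an initial segment is clopen, so by compactness a disjoint
cover of one cylinder by others is finite. All cylinders then live on a common initial segment
`A_N`. By projectivity, `P(D_Z)` is the `P_{A_N}`-mass of the expansions of `A_N` extending `Z`;
on the support of `P_{A_N}` (where the reduct is `A_N`) these are exactly the expansions whose
canonical extension to `ℕ` along `M` lies in `D_Z`. Additivity of a PMF over the disjoint
preimages of the `D_{Y_i}` gives the identity.
-/

open Function Set

section

variable {L : Type} {ar : L → ℕ}

theorem Struc.ext_iff {D : Type} {A B : Struc L ar D} : A = B ↔ ∀ R t, (A R t ↔ B R t) :=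
  funext_iff.trans <| forall_congr' fun _ => funext_iff.trans <| forall_congr' fun _ => eq_iff_iff

section Topology

variable {D : Type}

noncomputable def Struc.equivBool : Struc L ar D ≃ ∀ R, (Fin (ar R) → D) → Bool :=
  Equiv.piCongrRight fun _ => Equiv.piCongrRight fun _ => Equiv.propEquivBool

/- Truth values carry the discrete topology here (Mathlib's topology on `Prop` is the Sierpiński
one), so that the atomic conditions `ω R t` are clopen and `Struc L ar D` is a Cantor space. -/
noncomputable instance : TopologicalSpace (Struc L ar D) :=
  .induced Struc.equivBool inferInstance

instance : CompactSpace (Struc L ar D) :=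
  (Struc.equivBool.toHomeomorphOfIsInducing ⟨rfl⟩).symm.compactSpace

theorem Struc.isClopen_setOf_apply (R : L) (t : Fin (ar R) → D) :
    IsClopen {ω : Struc L ar D | ω R t} := by
  have h : {ω : Struc L ar D | ω R t} = Struc.equivBool ⁻¹' {b | b R t = true} := by
    classical
    ext ω
    exact decide_eq_true_iff.symm
  rw [h]
  have hcont : Continuous fun b : ∀ R, (Fin (ar R) → D) → Bool => b R t :=
    (continuous_apply t).comp (continuous_apply R)
  exact ((isClopen_discrete {true}).preimage hcont).preimage continuous_induced_dom

theorem Struc.isClopen_setOf_apply_iff (R : L) (t : Fin (ar R) → D) (q : Prop) :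
    IsClopen {ω : Struc L ar D | ω R t ↔ q} := by
  by_cases hq : q
  · simpa [hq] using Struc.isClopen_setOf_apply R t
  · convert (Struc.isClopen_setOf_apply R t).compl using 1
    ext ω
    simp [hq]

theorem isClosed_setOf_reduct_eq (E : Set L) (A : Struc ↥E (fun R => ar ↑R) D) :
    IsClosed {ω : Struc L ar D | reduct E ω = A} := by
  have h : {ω : Struc L ar D | reduct E ω = A} = ⋂ R : E, ⋂ t, {ω | ω R t ↔ A R t} := by
    ext ω
    simp only [mem_ofPred_eq, Struc.ext_iff, mem_iInter]
    rfl
  rw [h]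
  exact isClosed_iInter fun R => isClosed_iInter fun t => (Struc.isClopen_setOf_apply_iff _ _ _).1

theorem isClopen_setOf_restrictFin_eq [Finite L] (m : ℕ) (Z : Struc L ar (Fin m)) :
    IsClopen {ω : Struc L ar ℕ | restrictFin m ω = Z} := by
  have h : {ω : Struc L ar ℕ | restrictFin m ω = Z} =
      ⋂ R, ⋂ t : Fin (ar R) → Fin m, {ω | ω R (fun i => t i) ↔ Z R t} := by
    ext ω
    simp only [mem_ofPred_eq, Struc.ext_iff, mem_iInter]
    rfl
  rw [h]
  exact isClopen_iInter_of_finite fun R => isClopen_iInter_of_finite fun t =>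
    Struc.isClopen_setOf_apply_iff _ _ _

theorem isClosed_Cyl [Finite L] (E : Set L) (M : Struc ↥E (fun R => ar ↑R) ℕ) (m : ℕ)
    (Z : Struc L ar (Fin m)) : IsClosed (Cyl ar E M m Z) :=
  (isClosed_setOf_reduct_eq E M).inter (isClopen_setOf_restrictFin_eq m Z).1

end Topology

theorem IsCompact.finite_of_open_cover_of_private_points {X ι : Type*} [TopologicalSpace X]
    {K : Set X} (hK : IsCompact K) {U : ι → Set X} (hU : ∀ i, IsOpen (U i))
    (hcover : K ⊆ ⋃ i, U i) (hpriv : ∀ i, ∃ x ∈ K, ∀ j, x ∈ U j ↔ j = i) : Finite ι := by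
  obtain ⟨S, hS⟩ := hK.elim_finite_subcover U hU hcover
  have hmem : ∀ i, i ∈ S := fun i => by
    obtain ⟨x, hxK, hx⟩ := hpriv i
    obtain ⟨j, hjS, hxj⟩ := mem_iUnion₂.1 (hS hxK)
    rwa [(hx j).1 hxj] at hjS
  exact Finite.of_injective (fun i => (⟨i, hmem i⟩ : S)) fun i j h => congrArg Subtype.val h

theorem PMF.toOuterMeasure_iUnion {α ι : Type*} (p : PMF α) {s : ι → Set α}
    (hs : Pairwise (Disjoint on s)) :
    p.toOuterMeasure (⋃ i, s i) = ∑' i, p.toOuterMeasure (s i) := by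
  simp only [toOuterMeasure_apply]
  rw [ENNReal.tsum_comm]
  refine tsum_congr fun x => ?_
  by_cases hx : x ∈ ⋃ i, s i
  · obtain ⟨j, hj⟩ := mem_iUnion.1 hx
    rw [indicator_of_mem hx, tsum_eq_single j fun i hij =>
      indicator_of_notMem (fun hi => (hs hij).le_bot ⟨hi, hj⟩) _, indicator_of_mem hj]
  · rw [indicator_of_notMem hx]
    simp only [mem_iUnion, not_exists] at hx
    simp [indicator_of_notMem (hx _)]

section Extension

variable {E : Set L} {M : Struc ↥E (fun R => ar ↑R) ℕ}

def extendToNat (E : Set L) (M : Struc ↥E (fun R => ar ↑R) ℕ) {m : ℕ} (W : Struc L ar (Fin m)) :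
    Struc L ar ℕ :=
  fun R t => if h : ∀ i, t i < m then W R (fun i => ⟨t i, h i⟩) else ∃ hR : R ∈ E, M ⟨R, hR⟩ t

theorem reduct_extendToNat {m : ℕ} {W : Struc L ar (Fin m)} (hW : reduct E W = restrictFin m M) :
    reduct E (extendToNat E M W) = M := by
  refine Struc.ext_iff.2 fun ⟨R, hR⟩ t => ?_
  by_cases h : ∀ i, t i < m
  · simp only [reduct, extendToNat, dif_pos h]
    exact Struc.ext_iff.1 hW ⟨R, hR⟩ fun i => ⟨t i, h i⟩
  · simp only [reduct, extendToNat, dif_neg h]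
    exact ⟨fun ⟨_, hM⟩ => hM, fun hM => ⟨hR, hM⟩⟩

theorem extendToNat_mem_Cyl_iff {N : ℕ} {W : Struc L ar (Fin N)}
    (hW : reduct E W = restrictFin N M) {m : ℕ} (h : m ≤ N) (Z : Struc L ar (Fin m)) :
    extendToNat E M W ∈ Cyl ar E M m Z ↔ ExtendsAlong (Fin.castLEEmb h) Z W := by
  rw [Cyl, mem_ofPred_eq, and_iff_right (reduct_extendToNat hW), Struc.ext_iff]
  refine forall_congr' fun R => forall_congr' fun t => ?_
  have ht : ∀ i, (t i : ℕ) < N := fun i => (t i).2.trans_le h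
  simp only [restrictFin, extendToNat, dif_pos ht]
  exact Iff.rfl

theorem extendToNat_mem_Cyl {m : ℕ} {W : Struc L ar (Fin m)} (hW : reduct E W = restrictFin m M) :
    extendToNat E M W ∈ Cyl ar E M m W :=
  (extendToNat_mem_Cyl_iff hW le_rfl W).2 fun _ _ => Iff.rfl

end Extension

theorem finite_of_disjoint_Cyl_cover [Finite L] {E : Set L} {M : Struc ↥E (fun R => ar ↑R) ℕ}
    {I : Type} {n : ℕ} {X : Struc L ar (Fin n)} {k : I → ℕ} {Y : ∀ i, Struc L ar (Fin (k i))}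
    (hY : ∀ i, reduct E (Y i) = restrictFin (k i) M)
    (hdisj : Pairwise fun i j => Disjoint (Cyl ar E M (k i) (Y i)) (Cyl ar E M (k j) (Y j)))
    (hcover : Cyl ar E M n X = ⋃ i, Cyl ar E M (k i) (Y i)) : Finite I := by
  refine (isClosed_Cyl E M n X).isCompact.finite_of_open_cover_of_private_points
    (U := fun i => {ω | restrictFin (k i) ω = Y i})
    (fun i => (isClopen_setOf_restrictFin_eq _ _).2) ?_ fun i => ?_
  · rw [hcover]
    exact iUnion_mono fun i ω hω => hω.2
  · have hi := extendToNat_mem_Cyl (hY i)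
    refine ⟨_, hcover ▸ mem_iUnion_of_mem i hi, fun j => ⟨fun hj => ?_, fun hj => hj ▸ hi.2⟩⟩
    by_contra hji
    exact (hdisj hji).le_bot ⟨⟨hi.1, hj⟩, hi⟩

theorem ProjFam.apply_eq_toOuterMeasure_preimage_Cyl {E : Set L}
    {P : ∀ (D : Type) [Fintype D], Struc ↥E (fun R => ar ↑R) D → PMF (Struc L ar D)}
    (hsupp : ∀ (D : Type) [Fintype D] (A : Struc ↥E (fun R => ar ↑R) D) X,
      P D A X ≠ 0 → reduct E X = A)
    (hP : ProjFam P) (M : Struc ↥E (fun R => ar ↑R) ℕ) {m N : ℕ} (h : m ≤ N)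
    (Z : Struc L ar (Fin m)) :
    P (Fin m) (restrictFin m M) Z =
      (P (Fin N) (restrictFin N M)).toOuterMeasure (extendToNat E M ⁻¹' Cyl ar E M m Z) := by
  rw [hP (Fin m) (Fin N) (Fin.castLEEmb h) (restrictFin m M) (restrictFin N M)
    (fun _ _ => Iff.rfl) Z]
  refine PMF.toOuterMeasure_apply_eq_of_inter_support_eq _ (ext fun W => ?_)
  exact and_congr_left fun hW => (extendToNat_mem_Cyl_iff (hsupp _ _ W hW) h Z).symm

end

theorem stmt11_general {L : Type} [Fintype L] (ar : L → ℕ) (E : Set L)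
    (P : ∀ (D : Type) [Fintype D],
      Struc ↥E (fun R => ar ↑R) D → PMF (Struc L ar D))
    (hsupp : ∀ (D : Type) [Fintype D] (A : Struc ↥E (fun R => ar ↑R) D) X,
      P D A X ≠ 0 → reduct E X = A)
    (hP : ProjFam P)
    (M : Struc ↥E (fun R => ar ↑R) ℕ)
    {I : Type} (n : ℕ) (X : Struc L ar (Fin n))
    (k : I → ℕ) (Y : ∀ i, Struc L ar (Fin (k i)))
    (hY : ∀ i, reduct E (Y i) = restrictFin (k i) M)
    (hdisj : Pairwise fun i j => Disjoint (Cyl ar E M (k i) (Y i)) (Cyl ar E M (k j) (Y j)))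
    (hcover : Cyl ar E M n X = ⋃ i, Cyl ar E M (k i) (Y i)) :
    P (Fin n) (restrictFin n M) X =
      ∑' i : I, P (Fin (k i)) (restrictFin (k i) M) (Y i) := by
  have : Finite I := finite_of_disjoint_Cyl_cover hY hdisj hcover
  obtain ⟨B, hB⟩ := (finite_range k).bddAbove
  have hkN : ∀ i, k i ≤ max n B := fun i => (hB (mem_range_self i)).trans (le_max_right n B)
  rw [hP.apply_eq_toOuterMeasure_preimage_Cyl hsupp M (le_max_left n B), hcover, preimage_iUnion,
    PMF.toOuterMeasure_iUnion _ fun i j hij => (hdisj hij).preimage _]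
  exact tsum_congr fun i => (hP.apply_eq_toOuterMeasure_preimage_Cyl hsupp M (hkN i) (Y i)).symm

/-- the set function `D_X ↦ P_{X|_{L_Ext}}(X)` induced by a projective
`L_Ext`-`L_Int` family on the semiring of cylinder sets over initial segments of `M`
is σ-additive: a disjoint cylinder cover yields the corresponding sum identity. -/
theorem stmt11 {L : Type} [Fintype L] (ar : L → ℕ) (E : Set L)
    (P : ∀ (D : Type) [Fintype D],
      Struc ↥E (fun R => ar ↑R) D → PMF (Struc L ar D))
    (hsupp : ∀ (D : Type) [Fintype D] (A : Struc ↥E (fun R => ar ↑R) D) X,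
      P D A X ≠ 0 → reduct E X = A)
    (hP : ProjFam P)
    (M : Struc ↥E (fun R => ar ↑R) ℕ)
    {I : Type} (n : ℕ) (X : Struc L ar (Fin n))
    (hX : reduct E X = restrictFin n M)
    (k : I → ℕ) (Y : ∀ i, Struc L ar (Fin (k i)))
    (hY : ∀ i, reduct E (Y i) = restrictFin (k i) M)
    (hdisj : Pairwise fun i j => Disjoint (Cyl ar E M (k i) (Y i)) (Cyl ar E M (k j) (Y j)))
    (hcover : Cyl ar E M n X = ⋃ i, Cyl ar E M (k i) (Y i)) :
    P (Fin n) (restrictFin n M) X =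
      ∑' i : I, P (Fin (k i)) (restrictFin (k i) M) (Y i) :=
  stmt11_general ar E P hsupp hP M n X k Y hY hdisj hcover
end

section
/- Failure of σ-projectivity for the relational stochastic block model: fix parameters 0 < p < 1 and edge probabilities with p_{11} > p_{01} and p_{10} > p_{00} (all strictly between 0 and 1). In the relational stochastic block model family (P_D) on vocabulary {C, E} there exist finite sets D' ⊆ D, elements a, b ∈ D' with a ≠ b, and an {E}-structure Y on D' (edge data) such that the conditional probability of C(a) given that the E-reduct extends Y differs between P_{D'} and P_D; i.e., the conditional family obtained by treating E as observed data is not a projective {E}-{C,E} family of distributions. -/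
open MeasureTheory

open scoped ENNReal

attribute [local instance] Classical.propDecidable

/-- A `{C, E}`-structure: a colouring (community membership) `C` and a
binary edge relation `Ed`. -/
structure SBM (D : Type) where
  C : D → Prop
  Ed : D → D → Prop

/-- The stochastic-block-model probability of a world `X` on a finite domain `D`:
independent `Bernoulli p` community choices, conditionally independent
`Bernoulli p_{ij}` edge choices for distinct pairs, and no loops. -/
noncomputable def sbmDens (p p00 p01 p10 p11 : ℝ≥0∞) (D : Type) [Fintype D]
    (X : SBM D) : ℝ≥0∞ :=
  (∏ x : D, if X.C x then p else 1 - p) *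
    ∏ x : D, ∏ y : D,
      if x = y then (if X.Ed x y then 0 else 1)
      else
        (let pij := if X.C x then (if X.C y then p11 else p10)
                    else (if X.C y then p01 else p00);
         if X.Ed x y then pij else 1 - pij)

/-- `ω` on `D` extends the image of `X` (on `D'`) along `ι`. -/
def SBMExtends {D' D : Type} (ι : D' ↪ D) (X : SBM D') (ω : SBM D) : Prop :=
  (∀ x : D', ω.C (ι x) ↔ X.C x) ∧ (∀ x y : D', ω.Ed (ι x) (ι y) ↔ X.Ed x y)

lemma tsum_ed {D : Type} (Y : D → D → Prop) (f : SBM D → ℝ≥0∞)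
    (hf : ∀ ω : SBM D, ω.Ed ≠ Y → f ω = 0) :
    ∑' ω : SBM D, f ω = ∑' c : D → Bool, f ⟨fun x => c x = true, Y⟩ := by
  apply tsum_eq_tsum_of_ne_zero_bij
    (g := fun c : D → Bool => f ⟨fun x => c x = true, Y⟩)
    (i := fun c => (⟨fun x => c.1 x = true, Y⟩ : SBM D))
  · intro c c' h
    apply Subtype.ext
    funext x
    have h1 : (fun x => c.1 x = true) = (fun x => c'.1 x = true) := congrArg SBM.C h
    have h2 := congrFun h1 x
    by_cases hc : c.1 x = true <;> by_cases hc' : c'.1 x = true <;> simp_all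
  · intro ω hω
    have hEd : ω.Ed = Y := by
      by_contra hne
      exact hω (hf ω hne)
    have hωeq : ω = ⟨fun x => (if ω.C x then true else false) = true, Y⟩ := by
      obtain ⟨C, Ed⟩ := ω
      simp only [SBM.mk.injEq]
      refine ⟨funext fun x => ?_, hEd⟩
      by_cases h : C x <;> simp [h]
    refine ⟨⟨fun x => if ω.C x then true else false, ?_⟩, hωeq.symm⟩
    show f _ ≠ 0
    rw [← hωeq]; exact hω
  · intro c; rfl

def cf2 (t u : Bool) : Bool → Bool := fun x => bif x then t else u

def cf3 (t u v : Bool) : Option Bool → Bool :=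
  fun x => x.elim t (fun b => bif b then u else v)

def eqv2 : (Bool → Bool) ≃ Bool × Bool where
  toFun c := (c true, c false)
  invFun p := cf2 p.1 p.2
  left_inv c := by funext x; cases x <;> rfl
  right_inv p := rfl

def eqv3 : (Option Bool → Bool) ≃ Bool × Bool × Bool where
  toFun c := (c none, c (some true), c (some false))
  invFun p := cf3 p.1 p.2.1 p.2.2
  left_inv c := by funext x; rcases x with _ | (_|_) <;> rfl
  right_inv p := rfl

lemma sum_arrow_bool {M : Type*} [AddCommMonoid M] (f : (Bool → Bool) → M) :
    ∑ c : Bool → Bool, f c =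
      f (cf2 true true) + f (cf2 true false) + f (cf2 false true) + f (cf2 false false) := by
  rw [Fintype.sum_equiv eqv2 f (fun p => f (cf2 p.1 p.2))
      (fun c => by congr 1; exact (eqv2.left_inv c).symm)]
  rw [Fintype.sum_prod_type]
  simp only [Fintype.sum_bool]
  abel

lemma sum_arrow_obool {M : Type*} [AddCommMonoid M] (f : (Option Bool → Bool) → M) :
    ∑ c : Option Bool → Bool, f c =
      f (cf3 true true true) + f (cf3 true true false) + f (cf3 true false true) +
      f (cf3 true false false) + f (cf3 false true true) + f (cf3 false true false) +
      f (cf3 false false true) + f (cf3 false false false) := by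
  rw [Fintype.sum_equiv eqv3 f (fun p => f (cf3 p.1 p.2.1 p.2.2))
      (fun c => by congr 1; exact (eqv3.left_inv c).symm)]
  rw [Fintype.sum_prod_type]
  simp only [Fintype.sum_prod_type, Fintype.sum_bool]
  abel


lemma cross_pos {x y s r : ℝ} (hs : 0 < s) (hr : 0 < r) (key : (x - y) * s = r) : y < x := by
  nlinarith [mul_pos hs hr]

set_option maxHeartbeats 2000000 in
lemma coreReal (vp vq v00 w00 v01 w01 v10 w10 v11 w11 : ℝ)
    (hvp : 0 < vp) (hvq : 0 < vq)
    (h00 : 0 < v00) (hw00 : 0 < w00) (h01 : 0 < v01) (hw01 : 0 < w01)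
    (h10 : 0 < v10) (hw10 : 0 < w10) (h11 : 0 < v11) (hw11 : 0 < w11)
    (hr00 : w00 = 1 - v00) (hr01 : w01 = 1 - v01)
    (hr10 : w10 = 1 - v10) (hr11 : w11 = 1 - v11)
    (hlt1 : v01 < v11) (hlt2 : v00 < v10)
    (hER : (vp * vp * vp * w11 * w11 * v11 * w11 * w11 * w11 + vp * vp * vq * w11 * w10 * v11 * w10 * w01 * w01 + vq * vp * vp * w01 * w01 * v10 * w11 * w10 * w11 + vq * vp * vq * w01 * w00 * v10 * w10 * w00 * w01) * (vp * vp * vp * v11 * w11 * w11 * w11 * w11 * w11 + vp * vp * vq * v11 * w10 * w11 * w10 * w01 * w01 + vp * vq * vp * v10 * w11 * w01 * w01 * w11 * w10 + vp * vq * vq * v10 * w10 * w01 * w00 * w01 * w00 + vq * vp * vp * v01 * w01 * w10 * w11 * w10 * w11 + vq * vp * vq * v01 * w00 * w10 * w10 * w00 * w01 + vq * vq * vp * v00 * w01 * w00 * w01 * w10 * w10 + vq * vq * vq * v00 * w00 * w00 * w00 * w00 * w00) = (vp * vp * vp * v11 * w11 * w11 * w11 * w11 * w11 + vp * vp * vq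 * v11 * w10 * w11 * w10 * w01 * w01 + vq * vp * vp * v01 * w01 * w10 * w11 * w10 * w11 + vq * vp * vq * v01 * w00 * w10 * w10 * w00 * w01) * (vp * vp * vp * w11 * w11 * v11 * w11 * w11 * w11 + vp * vp * vq * w11 * w10 * v11 * w10 * w01 * w01 + vp * vq * vp * w10 * w11 * v01 * w01 * w11 * w10 + vp * vq * vq * w10 * w10 * v01 * w00 * w01 * w00 + vq * vp * vp * w01 * w01 * v10 * w11 * w10 * w11 + vq * vp * vq * w01 * w00 * v10 * w10 * w00 * w01 + vq * vq * vp * w00 * w01 * v00 * w01 * w10 * w10 + vq * vq * vq * w00 * w00 * v00 * w00 * w00 * w00))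
    (hE0 : (vp * vp * vp * w11 * w11 * v11 * w11 * w11 * w11 + vp * vp * vq * w11 * w10 * v11 * w10 * w01 * w01 + vq * vp * vp * w01 * w01 * v10 * w11 * w10 * w11 + vq * vp * vq * w01 * w00 * v10 * w10 * w00 * w01) * (vp * vp * vp * w11 * w11 * w11 * w11 * w11 * w11 + vp * vp * vq * w11 * w10 * w11 * w10 * w01 * w01 + vp * vq * vp * w10 * w11 * w01 * w01 * w11 * w10 + vp * vq * vq * w10 * w10 * w01 * w00 * w01 * w00 + vq * vp * vp * w01 * w01 * w10 * w11 * w10 * w11 + vq * vp * vq * w01 * w00 * w10 * w10 * w00 * w01 + vq * vq * vp * w00 * w01 * w00 * w01 * w10 * w10 + vq * vq * vq * w00 * w00 * w00 * w00 * w00 * w00) = (vp * vp * vp * w11 * w11 * w11 * w11 * w11 * w11 + vp * vp * vq * w11 * w10 * w11 * w10 * w01 * w01 + vq * vp * vp * w01 * w01 * w10 * w11 * w10 * w11 + vq * vp * vq * w01 * w00 * w10 * w10 * w00 * w01) * (vp * vp * vp * w11 * w11 * v11 * w11 * w11 * w11 + vp * vp * vq * w11 * w10 * v11 * w10 * w01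 * w01 + vp * vq * vp * w10 * w11 * v01 * w01 * w11 * w10 + vp * vq * vq * w10 * w10 * v01 * w00 * w01 * w00 + vq * vp * vp * w01 * w01 * v10 * w11 * w10 * w11 + vq * vp * vq * w01 * w00 * v10 * w10 * w00 * w01 + vq * vq * vp * w00 * w01 * v00 * w01 * w10 * w10 + vq * vq * vq * w00 * w00 * v00 * w00 * w00 * w00))
    (hB0 : (vp * vp * vp * v11 * w11 * v11 * w11 * w11 * w11 + vp * vp * vq * v11 * w10 * v11 * w10 * w01 * w01 + vq * vp * vp * v01 * w01 * v10 * w11 * w10 * w11 + vq * vp * vq * v01 * w00 * v10 * w10 * w00 * w01) * (vp * vp * vp * w11 * w11 * w11 * w11 * w11 * w11 + vp * vp * vq * w11 * w10 * w11 * w10 * w01 * w01 + vp * vq * vp * w10 * w11 * w01 * w01 * w11 * w10 + vp * vq * vq * w10 * w10 * w01 * w00 * w01 * w00 + vq * vp * vp * w01 * w01 * w10 * w11 * w10 * w11 + vq * vp * vq * w01 * w00 * w10 * w10 * w00 * w01 + vq * vq * vp * w00 * w01 * w00 * w01 * w10 * w10 + vq * vq * vq * w00 * w00 * w00 * w00 *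 w00 * w00) = (vp * vp * vp * w11 * w11 * w11 * w11 * w11 * w11 + vp * vp * vq * w11 * w10 * w11 * w10 * w01 * w01 + vq * vp * vp * w01 * w01 * w10 * w11 * w10 * w11 + vq * vp * vq * w01 * w00 * w10 * w10 * w00 * w01) * (vp * vp * vp * v11 * w11 * v11 * w11 * w11 * w11 + vp * vp * vq * v11 * w10 * v11 * w10 * w01 * w01 + vp * vq * vp * v10 * w11 * v01 * w01 * w11 * w10 + vp * vq * vq * v10 * w10 * v01 * w00 * w01 * w00 + vq * vp * vp * v01 * w01 * v10 * w11 * w10 * w11 + vq * vp * vq * v01 * w00 * v10 * w10 * w00 * w01 + vq * vq * vp * v00 * w01 * v00 * w01 * w10 * w10 + vq * vq * vq * v00 * w00 * v00 * w00 * w00 * w00)) :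
    False := by
  have cER := hER
  have cE0 := hE0
  have cB0 := hB0
  -- step 1 : v10 = v01
  have hPos : (0:ℝ) < (vp * vq * ((vp * (vp * w11^4 + vq * (w10*w01)^2)) * v11 * w11 * (vp * (w10*w01) * (vp * w11^2 + vq * w00^2)) + (vq * (w10*w01) * (vp * w11^2 + vq * w00^2)) * ((vq * (vp * (w10*w01)^2 + vq * w00^4)) * v00 * w00) + (vq * (w10*w01) * (vp * w11^2 + vq * w00^2)) * (vp * (w10*w01) * (vp * w11^2 + vq * w00^2)) * (v10*w01 + v01*w10))) := by positivity
  have hXZ : (v10 * w01 - v01 * w10) * (vp * vq * ((vp * (vp * w11^4 + vq * (w10*w01)^2)) * v11 * w11 * (vp * (w10*w01) * (vp * w11^2 + vq * w00^2)) + (vq * (w10*w01) * (vp * w11^2 + vq * w00^2)) * ((vq * (vp * (w10*w01)^2 + vq * w00^4)) * v00 * w00) + (vq * (w10*w01) * (vp * w11^2 + vq * w00^2)) * (vp * (w10*w01) * (vp * w11^2 + vq * w00^2)) * (v10*w01 + v01*w10))) = 0 := by linear_combination cER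
  have hXZ0 : v10 * w01 - v01 * w10 = 0 := by
    rcases mul_eq_zero.1 hXZ with h | h
    · exact h
    · exact absurd h hPos.ne'
  have hv : v10 = v01 := by linear_combination hXZ0 - v10*hr01 + v01*hr10
  subst hv
  have hw : w10 = w01 := by rw [hr10, hr01]
  subst hw
  -- step 2
  have I' : (vp * vq * vp * w10 * w11 * w10 * w10 * w11 * w10 + vp * vq * vq * w10 * w10 * w10 * w00 * w10 * w00 + vq * vq * vp * w00 * w10 * w00 * w10 * w10 * w10 + vq * vq * vq * w00 * w00 * w00 * w00 * w00 * w00) * ((vp * (vp * w11^4 + vq * (w10*w10)^2)) * (w11*v00 - v11*w00)^2 + (vq * (w10*w10) * (vp * w11^2 + vq * w00^2)) * (w10*v00 - v10*w00)^2) * vp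
      = (vp * vp * vp * w11 * w11 * w11 * w11 * w11 * w11 + vp * vp * vq * w11 * w10 * w11 * w10 * w10 * w10 + vq * vp * vp * w10 * w10 * w10 * w11 * w10 * w11 + vq * vp * vq * w10 * w00 * w10 * w10 * w00 * w10) * (vp * (w10*w10) * (vp * w11^2 + vq * w00^2)) * (w10*v00 - v10*w00)^2 * vq := by
    linear_combination (-2*w00*v00) * cE0 + w00^2 * cB0
  have II' : (vp * vq * vp * w10 * w11 * w10 * w10 * w11 * w10 + vp * vq * vq * w10 * w10 * w10 * w00 * w10 * w00 + vq * vq * vp * w00 * w10 * w00 * w10 * w10 * w10 + vq * vq * vq * w00 * w00 * w00 * w00 * w00 * w00) * (vq * (w10*w10) * (vp * w11^2 + vq * w00^2)) * (w10*v11 - v10*w11)^2 * vp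
      = (vp * vp * vp * w11 * w11 * w11 * w11 * w11 * w11 + vp * vp * vq * w11 * w10 * w11 * w10 * w10 * w10 + vq * vp * vp * w10 * w10 * w10 * w11 * w10 * w11 + vq * vp * vq * w10 * w00 * w10 * w10 * w00 * w10) * ((vp * (w10*w10) * (vp * w11^2 + vq * w00^2)) * (w10*v11 - v10*w11)^2 + (vq * (vp * (w10*w10)^2 + vq * w00^4)) * (w00*v11 - v00*w11)^2) * vq := by
    linear_combination (-2*w11*v11) * cE0 + w11^2 * cB0
  have e1 : w11*v00 - v11*w00 = v00 - v11 := by linear_combination v00*hr11 - v11*hr00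
  have e2 : w10*v00 - v10*w00 = v00 - v10 := by linear_combination v00*hr10 - v10*hr00
  have e3 : w10*v11 - v10*w11 = v11 - v10 := by linear_combination v11*hr10 - v10*hr11
  have e4 : w00*v11 - v00*w11 = v11 - v00 := by linear_combination v11*hr00 - v00*hr11
  rw [e1, e2] at I'
  rw [e3, e4] at II'
  have hu1 : (0:ℝ) < (vp * (vp * w11^4 + vq * (w10*w10)^2)) := by positivity
  have hu2 : (0:ℝ) < (vq * (w10*w10) * (vp * w11^2 + vq * w00^2)) := by positivity
  have hv1 : (0:ℝ) < (vp * (w10*w10) * (vp * w11^2 + vq * w00^2)) := by positivity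
  have hv2 : (0:ℝ) < (vq * (vp * (w10*w10)^2 + vq * w00^4)) := by positivity
  have hbZ : (0:ℝ) < vp * vq * vp * w10 * w11 * w10 * w10 * w11 * w10 + vp * vq * vq * w10 * w10 * w10 * w00 * w10 * w00 + vq * vq * vp * w00 * w10 * w00 * w10 * w10 * w10 + vq * vq * vq * w00 * w00 * w00 * w00 * w00 * w00 := by positivity
  have hnZ : (0:ℝ) < vp * vp * vp * w11 * w11 * w11 * w11 * w11 * w11 + vp * vp * vq * w11 * w10 * w11 * w10 * w10 * w10 + vq * vp * vp * w10 * w10 * w10 * w11 * w10 * w11 + vq * vp * vq * w10 * w00 * w10 * w10 * w00 * w10 := by positivity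
  have hq1 : (0:ℝ) < (v00 - v11)^2 :=
    pow_two_pos_of_ne_zero (sub_ne_zero.2 (ne_of_lt (hlt2.trans hlt1)))
  have hq2 : (0:ℝ) < (v00 - v10)^2 :=
    pow_two_pos_of_ne_zero (sub_ne_zero.2 (ne_of_lt hlt2))
  have hq3 : (0:ℝ) < (v11 - v10)^2 :=
    pow_two_pos_of_ne_zero (sub_ne_zero.2 (ne_of_gt hlt1))
  have hq4 : (0:ℝ) < (v11 - v00)^2 :=
    pow_two_pos_of_ne_zero (sub_ne_zero.2 (ne_of_gt (hlt2.trans hlt1)))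
  have key1 : ((vp * vp * vp * w11 * w11 * w11 * w11 * w11 * w11 + vp * vp * vq * w11 * w10 * w11 * w10 * w10 * w10 + vq * vp * vp * w10 * w10 * w10 * w11 * w10 * w11 + vq * vp * vq * w10 * w00 * w10 * w10 * w00 * w10) * (vp * (w10*w10) * (vp * w11^2 + vq * w00^2)) * vq - (vp * vq * vp * w10 * w11 * w10 * w10 * w11 * w10 + vp * vq * vq * w10 * w10 * w10 * w00 * w10 * w00 + vq * vq * vp * w00 * w10 * w00 * w10 * w10 * w10 + vq * vq * vq * w00 * w00 * w00 * w00 * w00 * w00) * (vq * (w10*w10) * (vp * w11^2 + vq * w00^2)) * vp) * (v00 - v10)^2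
      = (vp * vq * vp * w10 * w11 * w10 * w10 * w11 * w10 + vp * vq * vq * w10 * w10 * w10 * w00 * w10 * w00 + vq * vq * vp * w00 * w10 * w00 * w10 * w10 * w10 + vq * vq * vq * w00 * w00 * w00 * w00 * w00 * w00) * (vp * (vp * w11^4 + vq * (w10*w10)^2)) * (v00 - v11)^2 * vp := by linear_combination (-1) * I'
  have key2 : ((vp * vq * vp * w10 * w11 * w10 * w10 * w11 * w10 + vp * vq * vq * w10 * w10 * w10 * w00 * w10 * w00 + vq * vq * vp * w00 * w10 * w00 * w10 * w10 * w10 + vq * vq * vq * w00 * w00 * w00 * w00 * w00 * w00) * (vq * (w10*w10) * (vp * w11^2 + vq * w00^2)) * vp - (vp * vp * vp * w11 * w11 * w11 * w11 * w11 * w11 + vp * vp * vq * w11 * w10 * w11 * w10 * w10 * w10 + vq * vp * vp * w10 * w10 * w10 * w11 * w10 * w11 + vq * vp * vq * w10 * w00 * w10 * w10 * w00 * w10) * (vp * (w10*w10) * (vp * w11^2 + vq * w00^2)) * vq) * (v11 - v10)^2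
      = (vp * vp * vp * w11 * w11 * w11 * w11 * w11 * w11 + vp * vp * vq * w11 * w10 * w11 * w10 * w10 * w10 + vq * vp * vp * w10 * w10 * w10 * w11 * w10 * w11 + vq * vp * vq * w10 * w00 * w10 * w10 * w00 * w10) * (vq * (vp * (w10*w10)^2 + vq * w00^4)) * (v11 - v00)^2 * vq := by linear_combination II'
  have pos1 : (0:ℝ) < (vp * vq * vp * w10 * w11 * w10 * w10 * w11 * w10 + vp * vq * vq * w10 * w10 * w10 * w00 * w10 * w00 + vq * vq * vp * w00 * w10 * w00 * w10 * w10 * w10 + vq * vq * vq * w00 * w00 * w00 * w00 * w00 * w00) * (vp * (vp * w11^4 + vq * (w10*w10)^2)) * (v00 - v11)^2 * vp :=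
    mul_pos (mul_pos (mul_pos hbZ hu1) hq1) hvp
  have pos2 : (0:ℝ) < (vp * vp * vp * w11 * w11 * w11 * w11 * w11 * w11 + vp * vp * vq * w11 * w10 * w11 * w10 * w10 * w10 + vq * vp * vp * w10 * w10 * w10 * w11 * w10 * w11 + vq * vp * vq * w10 * w00 * w10 * w10 * w00 * w10) * (vq * (vp * (w10*w10)^2 + vq * w00^4)) * (v11 - v00)^2 * vq :=
    mul_pos (mul_pos (mul_pos hnZ hv2) hq4) hvq
  have cmp1 := cross_pos hq2 pos1 key1
  have cmp2 := cross_pos hq3 pos2 key2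
  exact absurd cmp2 (lt_asymm cmp1)

lemma measD2 (p p00 p01 p10 p11 : ℝ≥0∞) (Pm : PMF (SBM (Bool)))
    (hPm : ∀ X, Pm X = sbmDens p p00 p01 p10 p11 (Bool) X) :
    Pm.toOuterMeasure ({ω : SBM (Bool) | ω.C true} ∩ {ω | ω.Ed = fun _ _ => False}) =
      p * p * (1 - p11) * (1 - p11) + p * (1 - p) * (1 - p10) * (1 - p01) ∧
    Pm.toOuterMeasure {ω : SBM (Bool) | ω.Ed = fun _ _ => False} = p * p * (1 - p11) * (1 - p11) + p * (1 - p) * (1 - p10) * (1 - p01) + (1 - p) * p * (1 - p01) * (1 - p10) + (1 - p) * (1 - p) * (1 - p00) * (1 - p00) := by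
  constructor <;>
  · rw [PMF.toOuterMeasure_apply]
    rw [tsum_ed (Y := fun _ _ => False)
        (hf := fun ω hω => Set.indicator_of_notMem (by simp [hω]) _)]
    rw [tsum_fintype, sum_arrow_bool]
    simp only [Set.indicator_apply, Set.mem_inter_iff, Set.mem_setOf_eq, hPm, sbmDens,
      cf2, Option.elim, Bool.cond_true, Bool.cond_false,
      Fintype.prod_option, Fintype.prod_bool, Option.some.injEq, reduceCtorEq,
      eq_self_iff_true, if_true, if_false, and_true, true_and, and_false, false_and,
      or_false, false_or, and_self, or_self, ite_true, ite_false]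
    norm_num
    try ring

lemma measE (p p00 p01 p10 p11 : ℝ≥0∞) (Pm : PMF (SBM (Option Bool)))
    (hPm : ∀ X, Pm X = sbmDens p p00 p01 p10 p11 (Option Bool) X) :
    Pm.toOuterMeasure ({ω : SBM (Option Bool) | ω.C (some true)} ∩ {ω | ω.Ed = fun x y => x = some true ∧ y = none}) =
      p * p * p * (1 - p11) * (1 - p11) * p11 * (1 - p11) * (1 - p11) * (1 - p11) + p * p * (1 - p) * (1 - p11) * (1 - p10) * p11 * (1 - p10) * (1 - p01) * (1 - p01) + (1 - p) * p * p * (1 - p01) * (1 - p01) * p10 * (1 - p11) * (1 - p10) * (1 - p11) + (1 - p) * p * (1 - p) * (1 - p01) * (1 - p00) * p10 * (1 - p10) * (1 - p00) * (1 - p01) ∧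
    Pm.toOuterMeasure {ω : SBM (Option Bool) | ω.Ed = fun x y => x = some true ∧ y = none} = p * p * p * (1 - p11) * (1 - p11) * p11 * (1 - p11) * (1 - p11) * (1 - p11) + p * p * (1 - p) * (1 - p11) * (1 - p10) * p11 * (1 - p10) * (1 - p01) * (1 - p01) + p * (1 - p) * p * (1 - p10) * (1 - p11) * p01 * (1 - p01) * (1 - p11) * (1 - p10) + p * (1 - p) * (1 - p) * (1 - p10) * (1 - p10) * p01 * (1 - p00) * (1 - p01) * (1 - p00) + (1 - p) * p * p * (1 - p01) * (1 - p01) * p10 * (1 - p11) * (1 - p10) * (1 - p11) + (1 - p) * p * (1 - p) * (1 - p01) * (1 - p00) * p10 * (1 - p10) * (1 - p00) * (1 - p01) + (1 - p) * (1 - p) * p * (1 - p00) * (1 - p01) * p00 * (1 - p01) * (1 - p10) * (1 - p10) + (1 - p) * (1 - p) * (1 - p) * (1 - p00) * (1 - p00) * p00 * (1 - p00) * (1 - p00) * (1 - p00) := by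
  constructor <;>
  · rw [PMF.toOuterMeasure_apply]
    rw [tsum_ed (Y := fun x y => x = some true ∧ y = none)
        (hf := fun ω hω => Set.indicator_of_notMem (by simp [hω]) _)]
    rw [tsum_fintype, sum_arrow_obool]
    simp only [Set.indicator_apply, Set.mem_inter_iff, Set.mem_setOf_eq, hPm, sbmDens,
      cf3, Option.elim, Bool.cond_true, Bool.cond_false,
      Fintype.prod_option, Fintype.prod_bool, Option.some.injEq, reduceCtorEq,
      eq_self_iff_true, if_true, if_false, and_true, true_and, and_false, false_and,
      or_false, false_or, and_self, or_self, ite_true, ite_false]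
    norm_num
    try ring

lemma measR (p p00 p01 p10 p11 : ℝ≥0∞) (Pm : PMF (SBM (Option Bool)))
    (hPm : ∀ X, Pm X = sbmDens p p00 p01 p10 p11 (Option Bool) X) :
    Pm.toOuterMeasure ({ω : SBM (Option Bool) | ω.C (some true)} ∩ {ω | ω.Ed = fun x y => x = none ∧ y = some true}) =
      p * p * p * p11 * (1 - p11) * (1 - p11) * (1 - p11) * (1 - p11) * (1 - p11) + p * p * (1 - p) * p11 * (1 - p10) * (1 - p11) * (1 - p10) * (1 - p01) * (1 - p01) + (1 - p) * p * p * p01 * (1 - p01) * (1 - p10) * (1 - p11) * (1 - p10) * (1 - p11) + (1 - p) * p * (1 - p) * p01 * (1 - p00) * (1 - p10) * (1 - p10) * (1 - p00) * (1 - p01) ∧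
    Pm.toOuterMeasure {ω : SBM (Option Bool) | ω.Ed = fun x y => x = none ∧ y = some true} = p * p * p * p11 * (1 - p11) * (1 - p11) * (1 - p11) * (1 - p11) * (1 - p11) + p * p * (1 - p) * p11 * (1 - p10) * (1 - p11) * (1 - p10) * (1 - p01) * (1 - p01) + p * (1 - p) * p * p10 * (1 - p11) * (1 - p01) * (1 - p01) * (1 - p11) * (1 - p10) + p * (1 - p) * (1 - p) * p10 * (1 - p10) * (1 - p01) * (1 - p00) * (1 - p01) * (1 - p00) + (1 - p) * p * p * p01 * (1 - p01) * (1 - p10) * (1 - p11) * (1 - p10) * (1 - p11) + (1 - p) * p * (1 - p) * p01 * (1 - p00) * (1 - p10) * (1 - p10) * (1 - p00) * (1 - p01) + (1 - p) * (1 - p) * p * p00 * (1 - p01) * (1 - p00) * (1 - p01) * (1 - p10) * (1 - p10) + (1 - p) * (1 - p) * (1 - p) * p00 * (1 - p00) * (1 - p00) * (1 - p00) * (1 - p00) * (1 - p00) := by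
  constructor <;>
  · rw [PMF.toOuterMeasure_apply]
    rw [tsum_ed (Y := fun x y => x = none ∧ y = some true)
        (hf := fun ω hω => Set.indicator_of_notMem (by simp [hω]) _)]
    rw [tsum_fintype, sum_arrow_obool]
    simp only [Set.indicator_apply, Set.mem_inter_iff, Set.mem_setOf_eq, hPm, sbmDens,
      cf3, Option.elim, Bool.cond_true, Bool.cond_false,
      Fintype.prod_option, Fintype.prod_bool, Option.some.injEq, reduceCtorEq,
      eq_self_iff_true, if_true, if_false, and_true, true_and, and_false, false_and,
      or_false, false_or, and_self, or_self, ite_true, ite_false]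
    norm_num
    try ring

lemma measB (p p00 p01 p10 p11 : ℝ≥0∞) (Pm : PMF (SBM (Option Bool)))
    (hPm : ∀ X, Pm X = sbmDens p p00 p01 p10 p11 (Option Bool) X) :
    Pm.toOuterMeasure ({ω : SBM (Option Bool) | ω.C (some true)} ∩ {ω | ω.Ed = fun x y => (x = some true ∧ y = none) ∨ (x = none ∧ y = some true)}) =
      p * p * p * p11 * (1 - p11) * p11 * (1 - p11) * (1 - p11) * (1 - p11) + p * p * (1 - p) * p11 * (1 - p10) * p11 * (1 - p10) * (1 - p01) * (1 - p01) + (1 - p) * p * p * p01 * (1 - p01) * p10 * (1 - p11) * (1 - p10) * (1 - p11) + (1 - p) * p * (1 - p) * p01 * (1 - p00) * p10 * (1 - p10) * (1 - p00) * (1 - p01) ∧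
    Pm.toOuterMeasure {ω : SBM (Option Bool) | ω.Ed = fun x y => (x = some true ∧ y = none) ∨ (x = none ∧ y = some true)} = p * p * p * p11 * (1 - p11) * p11 * (1 - p11) * (1 - p11) * (1 - p11) + p * p * (1 - p) * p11 * (1 - p10) * p11 * (1 - p10) * (1 - p01) * (1 - p01) + p * (1 - p) * p * p10 * (1 - p11) * p01 * (1 - p01) * (1 - p11) * (1 - p10) + p * (1 - p) * (1 - p) * p10 * (1 - p10) * p01 * (1 - p00) * (1 - p01) * (1 - p00) + (1 - p) * p * p * p01 * (1 - p01) * p10 * (1 - p11) * (1 - p10) * (1 - p11) + (1 - p) * p * (1 - p) * p01 * (1 - p00) * p10 * (1 - p10) * (1 - p00) * (1 - p01) + (1 - p) * (1 - p) * p * p00 * (1 - p01) * p00 * (1 - p01) * (1 - p10) * (1 - p10) + (1 - p) * (1 - p) * (1 - p) * p00 * (1 - p00) * p00 * (1 - p00) * (1 - p00) * (1 - p00) := by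
  constructor <;>
  · rw [PMF.toOuterMeasure_apply]
    rw [tsum_ed (Y := fun x y => (x = some true ∧ y = none) ∨ (x = none ∧ y = some true))
        (hf := fun ω hω => Set.indicator_of_notMem (by simp [hω]) _)]
    rw [tsum_fintype, sum_arrow_obool]
    simp only [Set.indicator_apply, Set.mem_inter_iff, Set.mem_setOf_eq, hPm, sbmDens,
      cf3, Option.elim, Bool.cond_true, Bool.cond_false,
      Fintype.prod_option, Fintype.prod_bool, Option.some.injEq, reduceCtorEq,
      eq_self_iff_true, if_true, if_false, and_true, true_and, and_false, false_and,
      or_false, false_or, and_self, or_self, ite_true, ite_false]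
    norm_num
    try ring

lemma measZ (p p00 p01 p10 p11 : ℝ≥0∞) (Pm : PMF (SBM (Option Bool)))
    (hPm : ∀ X, Pm X = sbmDens p p00 p01 p10 p11 (Option Bool) X) :
    Pm.toOuterMeasure ({ω : SBM (Option Bool) | ω.C (some true)} ∩ {ω | ω.Ed = fun _ _ => False}) =
      p * p * p * (1 - p11) * (1 - p11) * (1 - p11) * (1 - p11) * (1 - p11) * (1 - p11) + p * p * (1 - p) * (1 - p11) * (1 - p10) * (1 - p11) * (1 - p10) * (1 - p01) * (1 - p01) + (1 - p) * p * p * (1 - p01) * (1 - p01) * (1 - p10) * (1 - p11) * (1 - p10) * (1 - p11) + (1 - p) * p * (1 - p) * (1 - p01) * (1 - p00) * (1 - p10) * (1 - p10) * (1 - p00) * (1 - p01) ∧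
    Pm.toOuterMeasure {ω : SBM (Option Bool) | ω.Ed = fun _ _ => False} = p * p * p * (1 - p11) * (1 - p11) * (1 - p11) * (1 - p11) * (1 - p11) * (1 - p11) + p * p * (1 - p) * (1 - p11) * (1 - p10) * (1 - p11) * (1 - p10) * (1 - p01) * (1 - p01) + p * (1 - p) * p * (1 - p10) * (1 - p11) * (1 - p01) * (1 - p01) * (1 - p11) * (1 - p10) + p * (1 - p) * (1 - p) * (1 - p10) * (1 - p10) * (1 - p01) * (1 - p00) * (1 - p01) * (1 - p00) + (1 - p) * p * p * (1 - p01) * (1 - p01) * (1 - p10) * (1 - p11) * (1 - p10) * (1 - p11) + (1 - p) * p * (1 - p) * (1 - p01) * (1 - p00) * (1 - p10) * (1 - p10) * (1 - p00) * (1 - p01) + (1 - p) * (1 - p) * p * (1 - p00) * (1 - p01) * (1 - p00) * (1 - p01) * (1 - p10) * (1 - p10) + (1 - p) * (1 - p) * (1 - p) * (1 - p00) * (1 - p00) * (1 - p00) * (1 - p00) * (1 - p00) * (1 - p00) := by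
  constructor <;>
  · rw [PMF.toOuterMeasure_apply]
    rw [tsum_ed (Y := fun _ _ => False)
        (hf := fun ω hω => Set.indicator_of_notMem (by simp [hω]) _)]
    rw [tsum_fintype, sum_arrow_obool]
    simp only [Set.indicator_apply, Set.mem_inter_iff, Set.mem_setOf_eq, hPm, sbmDens,
      cf3, Option.elim, Bool.cond_true, Bool.cond_false,
      Fintype.prod_option, Fintype.prod_bool, Option.some.injEq, reduceCtorEq,
      eq_self_iff_true, if_true, if_false, and_true, true_and, and_false, false_and,
      or_false, false_or, and_self, or_self, ite_true, ite_false]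
    norm_num
    try ring


set_option maxHeartbeats 2000000 in
/-- failure of σ-projectivity for the relational stochastic block model.
When `p_{11} > p_{01}` and `p_{10} > p_{00}` (all parameters strictly between 0 and 1),
treating the edge relation as observed data destroys projectivity: there are a small
domain `D'`, a larger domain `D`, an embedding of edge data, and a node `a` whose
conditional probability of community membership differs in the two domains. -/
theorem stmt18 (p p00 p01 p10 p11 : ℝ≥0∞)
    (hp0 : 0 < p) (hp1 : p < 1)
    (h000 : 0 < p00) (h001 : p00 < 1) (h010 : 0 < p01) (h011 : p01 < 1)
    (h100 : 0 < p10) (h101 : p10 < 1) (h110 : 0 < p11) (h111 : p11 < 1)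
    (hgt1 : p01 < p11) (hgt2 : p00 < p10)
    (P : ∀ (D : Type) [Fintype D], PMF (SBM D))
    (hP : ∀ (D : Type) [Fintype D] (X : SBM D),
      P D X = sbmDens p p00 p01 p10 p11 D X) :
    ∃ (D' D : Type) (iD' : Fintype D') (iD : Fintype D) (ι : D' ↪ D)
      (a b : D'), a ≠ b ∧
      ∃ (Y' : D' → D' → Prop) (Y : D → D → Prop),
        (∀ x y : D', Y (ι x) (ι y) ↔ Y' x y) ∧
        (@P D' iD').toOuterMeasure ({ω | ω.C a} ∩ {ω | ω.Ed = Y'}) /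
            (@P D' iD').toOuterMeasure {ω | ω.Ed = Y'} ≠
          (@P D iD).toOuterMeasure ({ω | ω.C (ι a)} ∩ {ω | ω.Ed = Y}) /
            (@P D iD).toOuterMeasure {ω | ω.Ed = Y} := by
  refine ⟨Bool, Option Bool, inferInstance, inferInstance,
    ⟨some, Option.some_injective _⟩, true, false, fun h => Bool.noConfusion h, ?_⟩
  simp only [Function.Embedding.coeFn_mk]
  rcases eq_or_ne ((P Bool).toOuterMeasure ({ω : SBM Bool | ω.C true} ∩ {ω | ω.Ed = (fun _ _ => False : Bool → Bool → Prop)}) / (P Bool).toOuterMeasure {ω : SBM Bool | ω.Ed = (fun _ _ => False : Bool → Bool → Prop)}) ((P (Option Bool)).toOuterMeasure ({ω : SBM (Option Bool) | ω.C (some true)} ∩ {ω | ω.Ed = (fun x y => x = some true ∧ y = none : Option Bool → Option Bool → Prop)}) / (P (Option Bool)).toOuterMeasure {ω : SBM (Option Bool) | ω.Ed = (fun x y => x = some true ∧ y = none : Option Bool → Option Bool → Prop)}) with hcE | hcE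
  swap
  · exact ⟨(fun _ _ => False), (fun x y => x = some true ∧ y = none), by simp, hcE⟩
  rcases eq_or_ne ((P Bool).toOuterMeasure ({ω : SBM Bool | ω.C true} ∩ {ω | ω.Ed = (fun _ _ => False : Bool → Bool → Prop)}) / (P Bool).toOuterMeasure {ω : SBM Bool | ω.Ed = (fun _ _ => False : Bool → Bool → Prop)}) ((P (Option Bool)).toOuterMeasure ({ω : SBM (Option Bool) | ω.C (some true)} ∩ {ω | ω.Ed = (fun x y => x = none ∧ y = some true : Option Bool → Option Bool → Prop)}) / (P (Option Bool)).toOuterMeasure {ω : SBM (Option Bool) | ω.Ed = (fun x y => x = none ∧ y = some true : Option Bool → Option Bool → Prop)}) with hcR | hcR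
  swap
  · exact ⟨(fun _ _ => False), (fun x y => x = none ∧ y = some true), by simp, hcR⟩
  rcases eq_or_ne ((P Bool).toOuterMeasure ({ω : SBM Bool | ω.C true} ∩ {ω | ω.Ed = (fun _ _ => False : Bool → Bool → Prop)}) / (P Bool).toOuterMeasure {ω : SBM Bool | ω.Ed = (fun _ _ => False : Bool → Bool → Prop)}) ((P (Option Bool)).toOuterMeasure ({ω : SBM (Option Bool) | ω.C (some true)} ∩ {ω | ω.Ed = (fun x y => (x = some true ∧ y = none) ∨ (x = none ∧ y = some true) : Option Bool → Option Bool → Prop)}) / (P (Option Bool)).toOuterMeasure {ω : SBM (Option Bool) | ω.Ed = (fun x y => (x = some true ∧ y = none) ∨ (x = none ∧ y = some true) : Option Bool → Option Bool → Prop)}) with hcB | hcB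
  swap
  · exact ⟨(fun _ _ => False), (fun x y => (x = some true ∧ y = none) ∨ (x = none ∧ y = some true)), by simp, hcB⟩
  rcases eq_or_ne ((P Bool).toOuterMeasure ({ω : SBM Bool | ω.C true} ∩ {ω | ω.Ed = (fun _ _ => False : Bool → Bool → Prop)}) / (P Bool).toOuterMeasure {ω : SBM Bool | ω.Ed = (fun _ _ => False : Bool → Bool → Prop)}) ((P (Option Bool)).toOuterMeasure ({ω : SBM (Option Bool) | ω.C (some true)} ∩ {ω | ω.Ed = (fun _ _ => False : Option Bool → Option Bool → Prop)}) / (P (Option Bool)).toOuterMeasure {ω : SBM (Option Bool) | ω.Ed = (fun _ _ => False : Option Bool → Option Bool → Prop)}) with hcZ | hcZ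
  swap
  · exact ⟨(fun _ _ => False), (fun _ _ => False), by simp, hcZ⟩
  exfalso
  obtain ⟨mDn, mDd⟩ := measD2 p p00 p01 p10 p11 (P Bool) (fun X => hP Bool X)
  obtain ⟨mEn, mEd⟩ := measE p p00 p01 p10 p11 (P (Option Bool)) (fun X => hP (Option Bool) X)
  obtain ⟨mRn, mRd⟩ := measR p p00 p01 p10 p11 (P (Option Bool)) (fun X => hP (Option Bool) X)
  obtain ⟨mBn, mBd⟩ := measB p p00 p01 p10 p11 (P (Option Bool)) (fun X => hP (Option Bool) X)
  obtain ⟨mZn, mZd⟩ := measZ p p00 p01 p10 p11 (P (Option Bool)) (fun X => hP (Option Bool) X)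
  rw [mDn, mDd, mEn, mEd] at hcE
  rw [mDn, mDd, mRn, mRd] at hcR
  rw [mDn, mDd, mBn, mBd] at hcB
  rw [mDn, mDd, mZn, mZd] at hcZ
  have hptop : p ≠ ∞ := (hp1.trans_le le_top).ne
  have h00top : p00 ≠ ∞ := (h001.trans_le le_top).ne
  have h01top : p01 ≠ ∞ := (h011.trans_le le_top).ne
  have h10top : p10 ≠ ∞ := (h101.trans_le le_top).ne
  have h11top : p11 ≠ ∞ := (h111.trans_le le_top).ne
  set vp := p.toNNReal with hvpdef
  set vq := (1 - p).toNNReal with hvqdef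
  set v00 := p00.toNNReal with hv00def
  set w00 := (1 - p00).toNNReal with hw00def
  set v01 := p01.toNNReal with hv01def
  set w01 := (1 - p01).toNNReal with hw01def
  set v10 := p10.toNNReal with hv10def
  set w10 := (1 - p10).toNNReal with hw10def
  set v11 := p11.toNNReal with hv11def
  set w11 := (1 - p11).toNNReal with hw11def
  have eqq : 1 - p = (vq : ℝ≥0∞) :=
    (ENNReal.coe_toNNReal (ENNReal.sub_ne_top ENNReal.one_ne_top)).symm
  have eq00 : 1 - p00 = (w00 : ℝ≥0∞) :=
    (ENNReal.coe_toNNReal (ENNReal.sub_ne_top ENNReal.one_ne_top)).symm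
  have eq01 : 1 - p01 = (w01 : ℝ≥0∞) :=
    (ENNReal.coe_toNNReal (ENNReal.sub_ne_top ENNReal.one_ne_top)).symm
  have eq10 : 1 - p10 = (w10 : ℝ≥0∞) :=
    (ENNReal.coe_toNNReal (ENNReal.sub_ne_top ENNReal.one_ne_top)).symm
  have eq11 : 1 - p11 = (w11 : ℝ≥0∞) :=
    (ENNReal.coe_toNNReal (ENNReal.sub_ne_top ENNReal.one_ne_top)).symm
  have ep : p = (vp : ℝ≥0∞) := (ENNReal.coe_toNNReal hptop).symm
  have ep00 : p00 = (v00 : ℝ≥0∞) := (ENNReal.coe_toNNReal h00top).symm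
  have ep01 : p01 = (v01 : ℝ≥0∞) := (ENNReal.coe_toNNReal h01top).symm
  have ep10 : p10 = (v10 : ℝ≥0∞) := (ENNReal.coe_toNNReal h10top).symm
  have ep11 : p11 = (v11 : ℝ≥0∞) := (ENNReal.coe_toNNReal h11top).symm
  have hvpn : 0 < vp := ENNReal.toNNReal_pos hp0.ne' hptop
  have hvqn : 0 < vq :=
    ENNReal.toNNReal_pos (tsub_pos_of_lt hp1).ne' (ENNReal.sub_ne_top ENNReal.one_ne_top)
  have h00n : 0 < v00 := ENNReal.toNNReal_pos h000.ne' h00top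
  have hw00n : 0 < w00 :=
    ENNReal.toNNReal_pos (tsub_pos_of_lt h001).ne' (ENNReal.sub_ne_top ENNReal.one_ne_top)
  have h01n : 0 < v01 := ENNReal.toNNReal_pos h010.ne' h01top
  have hw01n : 0 < w01 :=
    ENNReal.toNNReal_pos (tsub_pos_of_lt h011).ne' (ENNReal.sub_ne_top ENNReal.one_ne_top)
  have h10n : 0 < v10 := ENNReal.toNNReal_pos h100.ne' h10top
  have hw10n : 0 < w10 :=
    ENNReal.toNNReal_pos (tsub_pos_of_lt h101).ne' (ENNReal.sub_ne_top ENNReal.one_ne_top)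
  have h11n : 0 < v11 := ENNReal.toNNReal_pos h110.ne' h11top
  have hw11n : 0 < w11 :=
    ENNReal.toNNReal_pos (tsub_pos_of_lt h111).ne' (ENNReal.sub_ne_top ENNReal.one_ne_top)
  have hvp : (0:ℝ) < vp := hvpn
  have hvq : (0:ℝ) < vq := hvqn
  have h00 : (0:ℝ) < v00 := h00n
  have hw00 : (0:ℝ) < w00 := hw00n
  have h01 : (0:ℝ) < v01 := h01n
  have hw01 : (0:ℝ) < w01 := hw01n
  have h10 : (0:ℝ) < v10 := h10n
  have hw10 : (0:ℝ) < w10 := hw10n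
  have h11 : (0:ℝ) < v11 := h11n
  have hw11 : (0:ℝ) < w11 := hw11n
  have hr00 : (w00:ℝ) = 1 - (v00:ℝ) := by
    rw [hw00def, hv00def, ENNReal.coe_toNNReal_eq_toReal, ENNReal.coe_toNNReal_eq_toReal,
      ENNReal.toReal_sub_of_le h001.le ENNReal.one_ne_top, ENNReal.toReal_one]
  have hr01 : (w01:ℝ) = 1 - (v01:ℝ) := by
    rw [hw01def, hv01def, ENNReal.coe_toNNReal_eq_toReal, ENNReal.coe_toNNReal_eq_toReal,
      ENNReal.toReal_sub_of_le h011.le ENNReal.one_ne_top, ENNReal.toReal_one]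
  have hr10 : (w10:ℝ) = 1 - (v10:ℝ) := by
    rw [hw10def, hv10def, ENNReal.coe_toNNReal_eq_toReal, ENNReal.coe_toNNReal_eq_toReal,
      ENNReal.toReal_sub_of_le h101.le ENNReal.one_ne_top, ENNReal.toReal_one]
  have hr11 : (w11:ℝ) = 1 - (v11:ℝ) := by
    rw [hw11def, hv11def, ENNReal.coe_toNNReal_eq_toReal, ENNReal.coe_toNNReal_eq_toReal,
      ENNReal.toReal_sub_of_le h111.le ENNReal.one_ne_top, ENNReal.toReal_one]
  have hlt1 : (v01:ℝ) < (v11:ℝ) := by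
    rw [hv01def, hv11def, ENNReal.coe_toNNReal_eq_toReal, ENNReal.coe_toNNReal_eq_toReal]
    exact (ENNReal.toReal_lt_toReal h01top h11top).2 hgt1
  have hlt2 : (v00:ℝ) < (v10:ℝ) := by
    rw [hv00def, hv10def, ENNReal.coe_toNNReal_eq_toReal, ENNReal.coe_toNNReal_eq_toReal]
    exact (ENNReal.toReal_lt_toReal h00top h10top).2 hgt2
  rw [eqq, eq00, eq01, eq10, eq11] at hcE hcR hcB hcZ
  simp only [ep, ep00, ep01, ep10, ep11] at hcE hcR hcB hcZ
  norm_cast at hcE hcR hcB hcZ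
  replace hcE := (ENNReal.div_eq_div_iff (ENNReal.coe_ne_zero.2 (by positivity))
    ENNReal.coe_ne_top (ENNReal.coe_ne_zero.2 (by positivity)) ENNReal.coe_ne_top).1 hcE
  rw [← ENNReal.coe_mul, ← ENNReal.coe_mul, ENNReal.coe_inj] at hcE
  replace hcE := congrArg NNReal.toReal hcE
  push_cast at hcE
  replace hcR := (ENNReal.div_eq_div_iff (ENNReal.coe_ne_zero.2 (by positivity))
    ENNReal.coe_ne_top (ENNReal.coe_ne_zero.2 (by positivity)) ENNReal.coe_ne_top).1 hcR
  rw [← ENNReal.coe_mul, ← ENNReal.coe_mul, ENNReal.coe_inj] at hcR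
  replace hcR := congrArg NNReal.toReal hcR
  push_cast at hcR
  replace hcB := (ENNReal.div_eq_div_iff (ENNReal.coe_ne_zero.2 (by positivity))
    ENNReal.coe_ne_top (ENNReal.coe_ne_zero.2 (by positivity)) ENNReal.coe_ne_top).1 hcB
  rw [← ENNReal.coe_mul, ← ENNReal.coe_mul, ENNReal.coe_inj] at hcB
  replace hcB := congrArg NNReal.toReal hcB
  push_cast at hcB
  replace hcZ := (ENNReal.div_eq_div_iff (ENNReal.coe_ne_zero.2 (by positivity))
    ENNReal.coe_ne_top (ENNReal.coe_ne_zero.2 (by positivity)) ENNReal.coe_ne_top).1 hcZ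
  rw [← ENNReal.coe_mul, ← ENNReal.coe_mul, ENNReal.coe_inj] at hcZ
  replace hcZ := congrArg NNReal.toReal hcZ
  push_cast at hcZ
  have hnD : (0:ℝ) < (vp * vp * w11 * w11 + vp * vq * w10 * w01) := by positivity
  have hprodER : (((vp * vp * vp * w11 * w11 * v11 * w11 * w11 * w11 + vp * vp * vq * w11 * w10 * v11 * w10 * w01 * w01 + vq * vp * vp * w01 * w01 * v10 * w11 * w10 * w11 + vq * vp * vq * w01 * w00 * v10 * w10 * w00 * w01)*(vp * vp * vp * v11 * w11 * w11 * w11 * w11 * w11 + vp * vp * vq * v11 * w10 * w11 * w10 * w01 * w01 + vp * vq * vp * v10 * w11 * w01 * w01 * w11 * w10 + vp * vq * vq * v10 * w10 * w01 * w00 * w01 * w00 + vq * vp * vp * v01 * w01 * w10 * w11 * w10 * w11 + vq * vp * vq * v01 * w00 * w10 * w10 * w00 * w01 + vq * vq * vp * v00 * w01 * w00 * w01 * w10 * w10 + vq * vq * vq * v00 * w00 * w00 * w00 * w00 * w00) - (vp * vp * vp * v11 * w11 * w11 * w11 * w11 * w11 + vp * vp * vq * v11 * w10 * w11 * w10 *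 w01 * w01 + vq * vp * vp * v01 * w01 * w10 * w11 * w10 * w11 + vq * vp * vq * v01 * w00 * w10 * w10 * w00 * w01)*(vp * vp * vp * w11 * w11 * v11 * w11 * w11 * w11 + vp * vp * vq * w11 * w10 * v11 * w10 * w01 * w01 + vp * vq * vp * w10 * w11 * v01 * w01 * w11 * w10 + vp * vq * vq * w10 * w10 * v01 * w00 * w01 * w00 + vq * vp * vp * w01 * w01 * v10 * w11 * w10 * w11 + vq * vp * vq * w01 * w00 * v10 * w10 * w00 * w01 + vq * vq * vp * w00 * w01 * v00 * w01 * w10 * w10 + vq * vq * vq * w00 * w00 * v00 * w00 * w00 * w00)) * (vp * vp * w11 * w11 + vp * vq * w10 * w01) : ℝ) = 0 := by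
    linear_combination (vp * vp * vp * w11 * w11 * v11 * w11 * w11 * w11 + vp * vp * vq * w11 * w10 * v11 * w10 * w01 * w01 + vq * vp * vp * w01 * w01 * v10 * w11 * w10 * w11 + vq * vp * vq * w01 * w00 * v10 * w10 * w00 * w01) * hcR - (vp * vp * vp * v11 * w11 * w11 * w11 * w11 * w11 + vp * vp * vq * v11 * w10 * w11 * w10 * w01 * w01 + vq * vp * vp * v01 * w01 * w10 * w11 * w10 * w11 + vq * vp * vq * v01 * w00 * w10 * w10 * w00 * w01) * hcE
  have hER : ((vp * vp * vp * w11 * w11 * v11 * w11 * w11 * w11 + vp * vp * vq * w11 * w10 * v11 * w10 * w01 * w01 + vq * vp * vp * w01 * w01 * v10 * w11 * w10 * w11 + vq * vp * vq * w01 * w00 * v10 * w10 * w00 * w01) * (vp * vp * vp * v11 * w11 * w11 * w11 * w11 * w11 + vp * vp * vq * v11 * w10 * w11 * w10 * w01 * w01 + vp * vq * vp * v10 * w11 * w01 * w01 * w11 * w10 + vp * vq * vq * v10 * w10 * w01 * w00 * w01 * w00 + vq * vp * vp * v01 * w01 * w10 * w11 * w10 * w11 + vq * vp * vq * v01 * w00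 * w10 * w10 * w00 * w01 + vq * vq * vp * v00 * w01 * w00 * w01 * w10 * w10 + vq * vq * vq * v00 * w00 * w00 * w00 * w00 * w00) : ℝ) = (vp * vp * vp * v11 * w11 * w11 * w11 * w11 * w11 + vp * vp * vq * v11 * w10 * w11 * w10 * w01 * w01 + vq * vp * vp * v01 * w01 * w10 * w11 * w10 * w11 + vq * vp * vq * v01 * w00 * w10 * w10 * w00 * w01) * (vp * vp * vp * w11 * w11 * v11 * w11 * w11 * w11 + vp * vp * vq * w11 * w10 * v11 * w10 * w01 * w01 + vp * vq * vp * w10 * w11 * v01 * w01 * w11 * w10 + vp * vq * vq * w10 * w10 * v01 * w00 * w01 * w00 + vq * vp * vp * w01 * w01 * v10 * w11 * w10 * w11 + vq * vp * vq * w01 * w00 * v10 * w10 * w00 * w01 + vq * vq * vp * w00 * w01 * v00 * w01 * w10 * w10 + vq * vq * vq * w00 * w00 * v00 * w00 * w00 * w00) := by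
    rcases mul_eq_zero.1 hprodER with h | h
    · linear_combination h
    · exact absurd h hnD.ne'
  have hprodE0 : (((vp * vp * vp * w11 * w11 * v11 * w11 * w11 * w11 + vp * vp * vq * w11 * w10 * v11 * w10 * w01 * w01 + vq * vp * vp * w01 * w01 * v10 * w11 * w10 * w11 + vq * vp * vq * w01 * w00 * v10 * w10 * w00 * w01)*(vp * vp * vp * w11 * w11 * w11 * w11 * w11 * w11 + vp * vp * vq * w11 * w10 * w11 * w10 * w01 * w01 + vp * vq * vp * w10 * w11 * w01 * w01 * w11 * w10 + vp * vq * vq * w10 * w10 * w01 * w00 * w01 * w00 + vq * vp * vp * w01 * w01 * w10 * w11 * w10 * w11 + vq * vp * vq * w01 * w00 * w10 * w10 * w00 * w01 + vq * vq * vp * w00 * w01 * w00 * w01 * w10 * w10 + vq * vq * vq * w00 * w00 * w00 * w00 * w00 * w00) - (vp * vp * vp * w11 * w11 * w11 * w11 * w11 * w11 + vp * vp * vq * w11 * w10 * w11 * w10 * w01 * w01 + vq * vp * vp * w01 * w01 * w10 * w11 * w10 * w11 + vq * vp * vq * w01 * w00 * w10 * w10 * w00 * w01)*(vp * vp * vp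 * w11 * w11 * v11 * w11 * w11 * w11 + vp * vp * vq * w11 * w10 * v11 * w10 * w01 * w01 + vp * vq * vp * w10 * w11 * v01 * w01 * w11 * w10 + vp * vq * vq * w10 * w10 * v01 * w00 * w01 * w00 + vq * vp * vp * w01 * w01 * v10 * w11 * w10 * w11 + vq * vp * vq * w01 * w00 * v10 * w10 * w00 * w01 + vq * vq * vp * w00 * w01 * v00 * w01 * w10 * w10 + vq * vq * vq * w00 * w00 * v00 * w00 * w00 * w00)) * (vp * vp * w11 * w11 + vp * vq * w10 * w01) : ℝ) = 0 := by
    linear_combination (vp * vp * vp * w11 * w11 * v11 * w11 * w11 * w11 + vp * vp * vq * w11 * w10 * v11 * w10 * w01 * w01 + vq * vp * vp * w01 * w01 * v10 * w11 * w10 * w11 + vq * vp * vq * w01 * w00 * v10 * w10 * w00 * w01) * hcZ - (vp * vp * vp * w11 * w11 * w11 * w11 * w11 * w11 + vp * vp * vq * w11 * w10 * w11 * w10 * w01 * w01 + vq * vp * vp * w01 * w01 * w10 * w11 * w10 * w11 + vq * vp * vq * w01 * w00 * w10 * w10 * w00 * w01) * hcE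
  have hE0 : ((vp * vp * vp * w11 * w11 * v11 * w11 * w11 * w11 + vp * vp * vq * w11 * w10 * v11 * w10 * w01 * w01 + vq * vp * vp * w01 * w01 * v10 * w11 * w10 * w11 + vq * vp * vq * w01 * w00 * v10 * w10 * w00 * w01) * (vp * vp * vp * w11 * w11 * w11 * w11 * w11 * w11 + vp * vp * vq * w11 * w10 * w11 * w10 * w01 * w01 + vp * vq * vp * w10 * w11 * w01 * w01 * w11 * w10 + vp * vq * vq * w10 * w10 * w01 * w00 * w01 * w00 + vq * vp * vp * w01 * w01 * w10 * w11 * w10 * w11 + vq * vp * vq * w01 * w00 * w10 * w10 * w00 * w01 + vq * vq * vp * w00 * w01 * w00 * w01 * w10 * w10 + vq * vq * vq * w00 * w00 * w00 * w00 * w00 * w00) : ℝ) = (vp * vp * vp * w11 * w11 * w11 * w11 * w11 * w11 + vp * vp * vq * w11 * w10 * w11 * w10 * w01 * w01 + vq * vp * vp * w01 * w01 * w10 * w11 * w10 * w11 + vq * vp * vq * w01 * w00 * w10 * w10 * w00 * w01) * (vp * vp * vp * w11 * w11 * v11 * w11 * w11 * w11 + vp * vp * vq * w11 * w10 * v11 *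 w10 * w01 * w01 + vp * vq * vp * w10 * w11 * v01 * w01 * w11 * w10 + vp * vq * vq * w10 * w10 * v01 * w00 * w01 * w00 + vq * vp * vp * w01 * w01 * v10 * w11 * w10 * w11 + vq * vp * vq * w01 * w00 * v10 * w10 * w00 * w01 + vq * vq * vp * w00 * w01 * v00 * w01 * w10 * w10 + vq * vq * vq * w00 * w00 * v00 * w00 * w00 * w00) := by
    rcases mul_eq_zero.1 hprodE0 with h | h
    · linear_combination h
    · exact absurd h hnD.ne'
  have hprodB0 : (((vp * vp * vp * v11 * w11 * v11 * w11 * w11 * w11 + vp * vp * vq * v11 * w10 * v11 * w10 * w01 * w01 + vq * vp * vp * v01 * w01 * v10 * w11 * w10 * w11 + vq * vp * vq * v01 * w00 * v10 * w10 * w00 * w01)*(vp * vp * vp * w11 * w11 * w11 * w11 * w11 * w11 + vp * vp * vq * w11 * w10 * w11 * w10 * w01 * w01 + vp * vq * vp * w10 * w11 * w01 * w01 * w11 * w10 + vp * vq * vq * w10 * w10 * w01 * w00 * w01 * w00 + vq * vp * vp * w01 * w01 * w10 * w11 * w10 * w11 + vq * vp * vq * w01 * w00 * w10 * w10 * w00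 * w01 + vq * vq * vp * w00 * w01 * w00 * w01 * w10 * w10 + vq * vq * vq * w00 * w00 * w00 * w00 * w00 * w00) - (vp * vp * vp * w11 * w11 * w11 * w11 * w11 * w11 + vp * vp * vq * w11 * w10 * w11 * w10 * w01 * w01 + vq * vp * vp * w01 * w01 * w10 * w11 * w10 * w11 + vq * vp * vq * w01 * w00 * w10 * w10 * w00 * w01)*(vp * vp * vp * v11 * w11 * v11 * w11 * w11 * w11 + vp * vp * vq * v11 * w10 * v11 * w10 * w01 * w01 + vp * vq * vp * v10 * w11 * v01 * w01 * w11 * w10 + vp * vq * vq * v10 * w10 * v01 * w00 * w01 * w00 + vq * vp * vp * v01 * w01 * v10 * w11 * w10 * w11 + vq * vp * vq * v01 * w00 * v10 * w10 * w00 * w01 + vq * vq * vp * v00 * w01 * v00 * w01 * w10 * w10 + vq * vq * vq * v00 * w00 * v00 * w00 * w00 * w00)) * (vp * vp * w11 * w11 + vp * vq * w10 * w01) : ℝ) = 0 := by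
    linear_combination (vp * vp * vp * v11 * w11 * v11 * w11 * w11 * w11 + vp * vp * vq * v11 * w10 * v11 * w10 * w01 * w01 + vq * vp * vp * v01 * w01 * v10 * w11 * w10 * w11 + vq * vp * vq * v01 * w00 * v10 * w10 * w00 * w01) * hcZ - (vp * vp * vp * w11 * w11 * w11 * w11 * w11 * w11 + vp * vp * vq * w11 * w10 * w11 * w10 * w01 * w01 + vq * vp * vp * w01 * w01 * w10 * w11 * w10 * w11 + vq * vp * vq * w01 * w00 * w10 * w10 * w00 * w01) * hcB
  have hB0 : ((vp * vp * vp * v11 * w11 * v11 * w11 * w11 * w11 + vp * vp * vq * v11 * w10 * v11 * w10 * w01 * w01 + vq * vp * vp * v01 * w01 * v10 * w11 * w10 * w11 + vq * vp * vq * v01 * w00 * v10 * w10 * w00 * w01) * (vp * vp * vp * w11 * w11 * w11 * w11 * w11 * w11 + vp * vp * vq * w11 * w10 * w11 * w10 * w01 * w01 + vp * vq * vp * w10 * w11 * w01 * w01 * w11 * w10 + vp * vq * vq * w10 * w10 * w01 * w00 * w01 * w00 + vq * vp * vp * w01 * w01 * w10 * w11 * w10 * w11 + vq * vp * vq * w01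 * w00 * w10 * w10 * w00 * w01 + vq * vq * vp * w00 * w01 * w00 * w01 * w10 * w10 + vq * vq * vq * w00 * w00 * w00 * w00 * w00 * w00) : ℝ) = (vp * vp * vp * w11 * w11 * w11 * w11 * w11 * w11 + vp * vp * vq * w11 * w10 * w11 * w10 * w01 * w01 + vq * vp * vp * w01 * w01 * w10 * w11 * w10 * w11 + vq * vp * vq * w01 * w00 * w10 * w10 * w00 * w01) * (vp * vp * vp * v11 * w11 * v11 * w11 * w11 * w11 + vp * vp * vq * v11 * w10 * v11 * w10 * w01 * w01 + vp * vq * vp * v10 * w11 * v01 * w01 * w11 * w10 + vp * vq * vq * v10 * w10 * v01 * w00 * w01 * w00 + vq * vp * vp * v01 * w01 * v10 * w11 * w10 * w11 + vq * vp * vq * v01 * w00 * v10 * w10 * w00 * w01 + vq * vq * vp * v00 * w01 * v00 * w01 * w10 * w10 + vq * vq * vq * v00 * w00 * v00 * w00 * w00 * w00) := by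
    rcases mul_eq_zero.1 hprodB0 with h | h
    · linear_combination h
    · exact absurd h hnD.ne'
  exact coreReal (vp:ℝ) (vq:ℝ) (v00:ℝ) (w00:ℝ) (v01:ℝ) (w01:ℝ) (v10:ℝ) (w10:ℝ) (v11:ℝ) (w11:ℝ) hvp hvq h00 hw00 h01 hw01 h10 hw10
    h11 hw11 hr00 hr01 hr10 hr11 hlt1 hlt2 hER hE0 hB0
end
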